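/- arXiv:math/0607725 — 10 statements merged into one kernel-verified Lean document; each statement's English description precedes it below -/
import Mathlib

section
/- If an ideal 𝒜 of finite structures of signature μ has the extension property, then 𝒜 is representable, i.e., there exists a relational structure 𝔄 with age(𝔄) = 𝒜. -/
/-- A relational structure of signature `μ : I → ℕ`. -/
structure RelStruct {I : Type} (μ : I → ℕ) : Type 1 where
  carrier : Type
  rel : ∀ i, (Fin (μ i) → carrier) → Prop

namespace RelStruct

variable {I : Type} {μ : I → ℕ}

/-- `f` is an embedding of relational structures. -/
def IsEmbedding (A B : RelStruct μ) (f : A.carrier → B.carrier) : Prop :=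
  Function.Injective f ∧ ∀ i (x : Fin (μ i) → A.carrier), A.rel i x ↔ B.rel i (f ∘ x)

/-- `A` embeds into `B`. -/
def Embeds (A B : RelStruct μ) : Prop := ∃ f, IsEmbedding A B f

/-- The age of `A`: (the isomorphism-closed set of) all finite structures embeddable in `A`,
i.e. isomorphic to a substructure of `A` induced on a finite subset. -/
def age (A : RelStruct μ) : Set (RelStruct μ) :=
  {B | Finite B.carrier ∧ Embeds B A}

/-- An ideal in the poset of isomorphism types of finite structures, encoded as an
isomorphism-closed set of finite structures which is nonempty, downward closed under
embeddability, and up-directed. -/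
def IsIdeal (𝒜 : Set (RelStruct μ)) : Prop :=
  𝒜.Nonempty ∧ (∀ B ∈ 𝒜, Finite B.carrier) ∧
  (∀ B C : RelStruct μ, Finite B.carrier → Embeds B C → C ∈ 𝒜 → B ∈ 𝒜) ∧
  (∀ B ∈ 𝒜, ∀ C ∈ 𝒜, ∃ D ∈ 𝒜, Embeds B D ∧ Embeds C D)

/-- Isomorphism of relational structures. -/
def Iso (A B : RelStruct μ) : Prop :=
  ∃ f : A.carrier ≃ B.carrier,
    ∀ i (x : Fin (μ i) → A.carrier), A.rel i x ↔ B.rel i (⇑f ∘ x)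

/-- The number of isomorphism types of members of `𝒜`. -/
noncomputable def numTypes (𝒜 : Set (RelStruct μ)) : Cardinal :=
  Cardinal.mk (Quot (fun A B : 𝒜 => Iso A.1 B.1))

/-- A class of structures has the amalgamation property. -/
def AmalgamationProperty (𝒞 : Set (RelStruct μ)) : Prop :=
  ∀ A A₁ A₂, A ∈ 𝒞 → A₁ ∈ 𝒞 → A₂ ∈ 𝒞 →
    ∀ (f₁ : A.carrier → A₁.carrier) (f₂ : A.carrier → A₂.carrier),
      IsEmbedding A A₁ f₁ → IsEmbedding A A₂ f₂ →
      ∃ B ∈ 𝒞, ∃ (g₁ : A₁.carrier → B.carrier) (g₂ : A₂.carrier → B.carrier),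
        IsEmbedding A₁ B g₁ ∧ IsEmbedding A₂ B g₂ ∧ g₁ ∘ f₁ = g₂ ∘ f₂

end RelStruct

/-!
Choose finite representatives `B w` (`w : W`) of the isomorphism types in `𝒜`, so that
`#W ≤ numTypes 𝒜`. If `W` is finite, directedness of `𝒜` gives one member into which every `B w`
embeds. Otherwise well-order `W` so that every proper initial segment has fewer than `#W`
elements, and apply Zorn's lemma to the structures on subsets of `Σ w, B w` whose age lies in `𝒜`
and which contain a copy of every `B v` with `v ≤ w` as soon as they use a point over `w`.
If `x` were least with `B x` not embedding into a maximal such `M`, then `M` lives over the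
initial segment below `x`, so it has fewer than `numTypes 𝒜` elements; the extension property
embeds `M` and `B x` jointly into some `C`, and copying the part of `C` spanned by both back into
`Σ w, B w`, with the new points over `x`, enlarges `M`. In both cases the resulting structure has
age exactly `𝒜`.
-/

open scoped Cardinal

universe u

theorem Cardinal.mk_sigma_lt_of_finite {α : Type u} {β : α → Type u} [∀ a, Finite (β a)]
    {κ : Cardinal} (hκ : ℵ₀ ≤ κ) (hα : #α < κ) : #(Σ a, β a) < κ := by
  cases finite_or_infinite α
  · exact (lt_aleph0_of_finite _).trans_le hκ
  · calc #(Σ a, β a) = sum fun a => #(β a) := mk_sigma β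
      _ ≤ sum fun _ : α => ℵ₀ := sum_le_sum _ _ fun a => (lt_aleph0_of_finite _).le
      _ = #α := by rw [sum_const', mul_aleph0_eq (aleph0_le_mk α)]
      _ < κ := hα

namespace RelStruct

variable {I : Type} {μ : I → ℕ}

theorem Embeds.trans {A B C : RelStruct μ} (hAB : Embeds A B) (hBC : Embeds B C) :
    Embeds A C :=
  let ⟨f, hf⟩ := hAB
  let ⟨g, hg⟩ := hBC
  ⟨g ∘ f, hg.1.comp hf.1, fun i x => (hf.2 i x).trans (hg.2 i (f ∘ x))⟩

theorem Iso.refl (A : RelStruct μ) : Iso A A :=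
  ⟨Equiv.refl _, fun _ _ => Iff.rfl⟩

theorem Iso.symm {A B : RelStruct μ} (h : Iso A B) : Iso B A := by
  obtain ⟨f, hf⟩ := h
  refine ⟨f.symm, fun i x => ?_⟩
  simpa [Function.comp_def] using (hf i (f.symm ∘ x)).symm

theorem Iso.trans {A B C : RelStruct μ} (hAB : Iso A B) (hBC : Iso B C) : Iso A C :=
  let ⟨f, hf⟩ := hAB
  let ⟨g, hg⟩ := hBC
  ⟨f.trans g, fun i x => (hf i x).trans (hg i (f ∘ x))⟩

theorem Iso.embeds {A B : RelStruct μ} (h : Iso A B) : Embeds A B :=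
  let ⟨f, hf⟩ := h
  ⟨f, f.injective, hf⟩

theorem age_subset_age {A B : RelStruct μ} (h : Embeds A B) : age A ⊆ age B :=
  fun _ hC => ⟨hC.1, hC.2.trans h⟩

theorem IsEmbedding.embeds_of_range_subset {A B C : RelStruct μ} {φ : A.carrier → C.carrier}
    {f : B.carrier → C.carrier} (hφ : IsEmbedding A C φ) (hf : IsEmbedding B C f)
    (h : Set.range f ⊆ Set.range φ) : Embeds B A := by
  choose g hg using fun b => h ⟨b, rfl⟩
  have hφg : φ ∘ g = f := funext hg
  refine ⟨g, fun b b' hbb' => hf.1 ?_, fun i x => ?_⟩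
  · rw [← hg b, ← hg b', hbb']
  · rw [hf.2 i x, hφ.2 i (g ∘ x), ← Function.comp_assoc, hφg]

def comap (C : RelStruct μ) {S : Type} (κ : S → C.carrier) : RelStruct μ :=
  ⟨S, fun i x => C.rel i (κ ∘ x)⟩

theorem isEmbedding_comap (C : RelStruct μ) {S : Type} {κ : S → C.carrier}
    (hκ : Function.Injective κ) : IsEmbedding (C.comap κ) C κ :=
  ⟨hκ, fun _ _ => Iff.rfl⟩

-- Unlike `RelStruct μ : Type 1`, codes of finite structures form a `Type`, as the index set of
-- the representatives and the ambient type `Σ w, B w` of the construction must.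
def Code (μ : I → ℕ) : Type := Σ n : ℕ, ∀ i, (Fin (μ i) → Fin n) → Prop

def Code.toRelStruct (c : Code μ) : RelStruct μ := ⟨Fin c.1, c.2⟩

theorem exists_iso_code (A : RelStruct μ) [Finite A.carrier] :
    ∃ c : Code μ, Iso A c.toRelStruct := by
  obtain ⟨n, ⟨e⟩⟩ := Finite.exists_equiv_fin A.carrier
  exact ⟨⟨n, fun i x => A.rel i (e.symm ∘ x)⟩, e, fun i x =>
    iff_of_eq (congrArg (A.rel i) (funext fun j => (e.symm_apply_apply (x j)).symm))⟩

theorem exists_representatives {𝒜 : Set (RelStruct μ)} (hfin : ∀ A ∈ 𝒜, Finite A.carrier)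
    (hdc : ∀ A B : RelStruct μ, Finite A.carrier → Embeds A B → B ∈ 𝒜 → A ∈ 𝒜) :
    ∃ (W : Type) (B : W → RelStruct μ), Cardinal.lift.{1} #W ≤ numTypes 𝒜 ∧ (∀ w, B w ∈ 𝒜) ∧
      ∀ A ∈ 𝒜, ∃ w, Embeds A (B w) := by
  have hiso : Equivalence fun A B : 𝒜 => Iso A.1 B.1 := ⟨fun _ => Iso.refl _, Iso.symm, Iso.trans⟩
  choose c hc using fun q : Quot fun A B : 𝒜 => Iso A.1 B.1 =>
    haveI := hfin _ q.out.2
    exists_iso_code q.out.1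
  refine ⟨Set.range c, fun w => w.1.toRelStruct,
    Cardinal.mk_range_le_lift.trans_eq (Cardinal.lift_uzero _),
    ?_, fun A hA => ?_⟩
  · rintro ⟨_, q, rfl⟩
    exact hdc _ _ (inferInstanceAs (Finite (Fin _))) (hc q).symm.embeds q.out.2
  · let q := Quot.mk (fun A B : 𝒜 => Iso A.1 B.1) ⟨A, hA⟩
    have hqA : Iso A q.out.1 := hiso.eqvGen_iff.1 (Quot.eqvGen_exact (Quot.out_eq q).symm)
    exact ⟨⟨c q, q, rfl⟩, hqA.embeds.trans (hc q).embeds⟩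

theorem exists_forall_embeds_of_finite {𝒜 : Set (RelStruct μ)} (hne : 𝒜.Nonempty)
    (hdir : ∀ A ∈ 𝒜, ∀ B ∈ 𝒜, ∃ D ∈ 𝒜, Embeds A D ∧ Embeds B D)
    {W : Type} [Finite W] {B : W → RelStruct μ} (hB : ∀ w, B w ∈ 𝒜) :
    ∃ D ∈ 𝒜, ∀ w, Embeds (B w) D := by
  have : IsTrans (RelStruct μ) Embeds := ⟨fun _ _ _ => Embeds.trans⟩
  have := hne.to_subtype
  have hdirected : Directed Embeds (Subtype.val : 𝒜 → RelStruct μ) := fun A B => by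
    obtain ⟨D, hD, hAD, hBD⟩ := hdir A A.2 B B.2
    exact ⟨⟨D, hD⟩, hAD, hBD⟩
  obtain ⟨D, hD⟩ := hdirected.finite_le fun w => (⟨B w, hB w⟩ : 𝒜)
  exact ⟨D, D.2, hD⟩

/-- A structure whose universe is a subset of the fixed type `Ω`, so that chains of them have
unions. Only the values of `rel` on tuples from `dom` matter. -/
structure PartialStruct (Ω : Type) (μ : I → ℕ) : Type where
  dom : Set Ω
  rel : ∀ i, (Fin (μ i) → Ω) → Prop

namespace PartialStruct

variable {Ω : Type}

def toRelStruct (P : PartialStruct Ω μ) : RelStruct μ :=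
  ⟨P.dom, fun i x => P.rel i (Subtype.val ∘ x)⟩

instance : Preorder (PartialStruct Ω μ) where
  le P Q := P.dom ⊆ Q.dom ∧ ∀ i (x : Fin (μ i) → Ω), (∀ j, x j ∈ P.dom) → (P.rel i x ↔ Q.rel i x)
  le_refl _ := ⟨subset_rfl, fun _ _ _ => Iff.rfl⟩
  le_trans _ _ _ hPQ hQR :=
    ⟨hPQ.1.trans hQR.1, fun i x hx => (hPQ.2 i x hx).trans (hQR.2 i x fun j => hPQ.1 (hx j))⟩

theorem embeds_of_le {P Q : PartialStruct Ω μ} (h : P ≤ Q) :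
    Embeds P.toRelStruct Q.toRelStruct :=
  ⟨Set.inclusion h.1, Set.inclusion_injective h.1, fun i x => h.2 i _ fun j => (x j).2⟩

theorem embeds_of_le_of_forall_mem {P Q : PartialStruct Ω μ} {A : RelStruct μ} (hPQ : P ≤ Q)
    {f : A.carrier → Q.dom} (hf : IsEmbedding A Q.toRelStruct f) (hfP : ∀ a, (f a : Ω) ∈ P.dom) :
    Embeds A P.toRelStruct :=
  ⟨fun a => ⟨f a, hfP a⟩,
    fun _ _ h => hf.1 <| Subtype.ext <| congrArg (fun p : P.dom => (p : Ω)) h,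
    fun i x => (hf.2 i x).trans (hPQ.2 i _ fun j => hfP (x j)).symm⟩

def map (A : RelStruct μ) (ω : A.carrier → Ω) : PartialStruct Ω μ :=
  ⟨Set.range ω, fun i x => ∃ z, ω ∘ z = x ∧ A.rel i z⟩

theorem iso_map (A : RelStruct μ) {ω : A.carrier → Ω} (hω : Function.Injective ω) :
    Iso A (map A ω).toRelStruct :=
  ⟨Equiv.ofInjective ω hω, fun _ x =>
    ⟨fun h => ⟨x, rfl, h⟩, fun ⟨_, hz, h⟩ => hω.comp_left hz ▸ h⟩⟩

theorem le_map {U : PartialStruct Ω μ} {A : RelStruct μ} {ω : A.carrier → Ω}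
    (hω : Function.Injective ω) {g : U.dom → A.carrier} (hg : IsEmbedding U.toRelStruct A g)
    (hωg : ∀ u, ω (g u) = u) : U ≤ map A ω := by
  refine ⟨fun u hu => ⟨g ⟨u, hu⟩, hωg _⟩, fun i x hx => ?_⟩
  have hx' : ω ∘ (g ∘ fun j => ⟨x j, hx j⟩) = x := funext fun j => hωg _
  refine (hg.2 i fun j => ⟨x j, hx j⟩).trans ⟨fun h => ⟨_, hx', h⟩, ?_⟩
  rintro ⟨z, hz, h⟩
  rwa [hω.comp_left (hz.trans hx'.symm)] at h

theorem exists_le_embeds {U : PartialStruct Ω μ} {B C : RelStruct μ}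
    (hU : Embeds U.toRelStruct C) (hB : Embeds B C) {ω : B.carrier → Ω}
    (hω : Function.Injective ω) (hωU : ∀ b, ω b ∉ U.dom) :
    ∃ V : PartialStruct Ω μ, U ≤ V ∧ Embeds V.toRelStruct C ∧ Embeds B V.toRelStruct ∧
      V.dom ⊆ U.dom ∪ Set.range ω := by
  obtain ⟨e, he⟩ := hU
  obtain ⟨f, hf⟩ := hB
  -- `V` is the part of `C` spanned by the image of `e` and the rest of the image of `f`, copied
  -- into `Ω` so that the points of `U` stay where they are and the new ones land in `range ω`.
  let κ : U.dom ⊕ {b // f b ∉ Set.range e} → C.carrier := Sum.elim e (f ∘ Subtype.val)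
  let ν : U.dom ⊕ {b // f b ∉ Set.range e} → Ω := Sum.elim Subtype.val (ω ∘ Subtype.val)
  have hκ : Function.Injective κ :=
    he.1.sumElim (hf.1.comp Subtype.val_injective) fun u b h => b.2 ⟨u, h⟩
  have hν : Function.Injective ν :=
    Subtype.val_injective.sumElim (hω.comp Subtype.val_injective) fun u b h =>
      hωU b.1 ((show (u : Ω) = ω b.1 from h) ▸ u.2)
  refine ⟨map (C.comap κ) ν, le_map hν (g := Sum.inl) ⟨Sum.inl_injective, he.2⟩ fun _ => rfl,
    (iso_map _ hν).symm.embeds.trans ⟨κ, C.isEmbedding_comap hκ⟩, ?_, ?_⟩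
  · refine ((C.isEmbedding_comap hκ).embeds_of_range_subset hf ?_).trans (iso_map _ hν).embeds
    rintro _ ⟨b, rfl⟩
    by_cases h : f b ∈ Set.range e
    · obtain ⟨u, hu⟩ := h
      exact ⟨Sum.inl u, hu⟩
    · exact ⟨Sum.inr ⟨b, h⟩, rfl⟩
  · rintro _ ⟨u | b, rfl⟩
    · exact Or.inl u.2
    · exact Or.inr ⟨b, rfl⟩

def sUnion (c : Set (PartialStruct Ω μ)) : PartialStruct Ω μ :=
  ⟨⋃ P ∈ c, P.dom, fun i x => ∃ P ∈ c, (∀ j, x j ∈ P.dom) ∧ P.rel i x⟩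

theorem le_sUnion {c : Set (PartialStruct Ω μ)} (hc : IsChain (· ≤ ·) c)
    {P : PartialStruct Ω μ} (hP : P ∈ c) : P ≤ sUnion c := by
  refine ⟨Set.subset_biUnion_of_mem hP, fun i x hx => ⟨fun h => ⟨P, hP, hx, h⟩, ?_⟩⟩
  rintro ⟨Q, hQ, hxQ, h⟩
  rcases hc.total hP hQ with hPQ | hQP
  · exact (hPQ.2 i x hx).2 h
  · exact (hQP.2 i x hxQ).1 h

theorem exists_embeds_of_embeds_sUnion {c : Set (PartialStruct Ω μ)} (hc : IsChain (· ≤ ·) c)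
    (hne : c.Nonempty) {A : RelStruct μ} [Finite A.carrier]
    (hA : Embeds A (sUnion c).toRelStruct) : ∃ P ∈ c, Embeds A P.toRelStruct := by
  obtain ⟨f, hf⟩ := hA
  have hmem (a : A.carrier) : ∃ P : c, (f a).1 ∈ P.1.dom := by
    obtain ⟨P, hP, h⟩ := Set.mem_iUnion₂.1 (f a).2
    exact ⟨⟨P, hP⟩, h⟩
  choose P hP using hmem
  have := hne.to_subtype
  obtain ⟨Q, hQ⟩ := hc.directedOn.directed_val.finite_le P
  exact ⟨Q, Q.2, embeds_of_le_of_forall_mem (le_sUnion hc Q.2) hf fun a => (hQ a).1 (hP a)⟩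

end PartialStruct

section Realization

open PartialStruct

variable {ι : Type} [LinearOrder ι] (𝒜 : Set (RelStruct μ)) (B : ι → RelStruct μ)

def IsAdmissible (P : PartialStruct (Σ i, (B i).carrier) μ) : Prop :=
  age P.toRelStruct ⊆ 𝒜 ∧ ∀ p ∈ P.dom, ∀ j ≤ p.1, Embeds (B j) P.toRelStruct

variable {𝒜 B}

theorem isAdmissible_sUnion {c : Set (PartialStruct (Σ i, (B i).carrier) μ)}
    (hc : IsChain (· ≤ ·) c) (hne : c.Nonempty) (hadm : ∀ P ∈ c, IsAdmissible 𝒜 B P) :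
    IsAdmissible 𝒜 B (sUnion c) := by
  refine ⟨fun A hA => ?_, fun p hp j hj => ?_⟩
  · have := hA.1
    obtain ⟨P, hP, hAP⟩ := exists_embeds_of_embeds_sUnion hc hne hA.2
    exact (hadm P hP).1 ⟨hA.1, hAP⟩
  · obtain ⟨P, hP, hpP⟩ := Set.mem_iUnion₂.1 hp
    exact ((hadm P hP).2 p hpP j hj).trans (embeds_of_le (le_sUnion hc hP))

theorem isAdmissible_map_of_isBot {x : ι} (hx : IsBot x) (hB : age (B x) ⊆ 𝒜) :
    IsAdmissible 𝒜 B (map (B x) (Sigma.mk (β := fun i => (B i).carrier) x)) := by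
  have hiso := iso_map (B x) (ω := Sigma.mk (β := fun i => (B i).carrier) x) sigma_mk_injective
  refine ⟨(age_subset_age hiso.symm.embeds).trans hB, ?_⟩
  rintro _ ⟨b, rfl⟩ j hj
  rw [le_antisymm hj (hx j)]
  exact hiso.embeds

variable (hext : ∀ x, ∀ A : RelStruct μ, #A.carrier ≤ #(Σ j : Set.Iio x, (B j).carrier) →
  age A ⊆ 𝒜 → ∃ C, age C ⊆ 𝒜 ∧ Embeds A C ∧ Embeds (B x) C)
include hext

theorem exists_isAdmissible_embeds {M : PartialStruct (Σ i, (B i).carrier) μ}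
    (hM : IsAdmissible 𝒜 B M) {x : ι} (hMx : ∀ p ∈ M.dom, p.1 < x)
    (hx : ∀ j < x, Embeds (B j) M.toRelStruct) :
    ∃ V, IsAdmissible 𝒜 B V ∧ M ≤ V ∧ Embeds (B x) V.toRelStruct := by
  have hcard : #M.toRelStruct.carrier ≤ #(Σ j : Set.Iio x, (B j).carrier) :=
    (Cardinal.mk_le_mk_of_subset hMx).trans_eq
      (Cardinal.mk_congr (Equiv.subtypeSigmaEquiv _ (· < x)))
  obtain ⟨C, hC𝒜, hMC, hBC⟩ := hext x _ hcard hM.1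
  obtain ⟨V, hMV, hVC, hBV, hVdom⟩ :=
    exists_le_embeds hMC hBC (ω := Sigma.mk (β := fun i => (B i).carrier) x)
      sigma_mk_injective fun b hb => lt_irrefl x (hMx _ hb)
  refine ⟨V, ⟨(age_subset_age hVC).trans hC𝒜, fun p hp j hj => ?_⟩, hMV, hBV⟩
  rcases hVdom hp with hpM | ⟨b, rfl⟩
  · exact (hM.2 p hpM j hj).trans (embeds_of_le hMV)
  · rcases hj.lt_or_eq with hjx | rfl
    · exact (hx j hjx).trans (embeds_of_le hMV)
    · exact hBV

theorem exists_age_subset_forall_embeds [WellFoundedLT ι] [Nonempty ι]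
    (hB : ∀ i, age (B i) ⊆ 𝒜) : ∃ A : RelStruct μ, age A ⊆ 𝒜 ∧ ∀ i, Embeds (B i) A := by
  obtain ⟨x₀, -, hx₀⟩ := wellFounded_lt.has_min (Set.univ : Set ι) Set.univ_nonempty
  obtain ⟨M, -, hM⟩ := zorn_le_nonempty₀ {P | IsAdmissible 𝒜 B P}
    (fun c hc hchain P hP => ⟨_, isAdmissible_sUnion hchain ⟨P, hP⟩ hc,
      fun _ hQ => le_sUnion hchain hQ⟩)
    _ (isAdmissible_map_of_isBot (fun j => not_lt.1 (hx₀ j trivial)) (hB x₀))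
  refine ⟨M.toRelStruct, hM.1.1, fun i => ?_⟩
  by_contra hi
  obtain ⟨x, hx, hxmin⟩ := wellFounded_lt.has_min {i | ¬Embeds (B i) M.toRelStruct} ⟨i, hi⟩
  have hMx : ∀ p ∈ M.dom, p.1 < x := fun p hp => lt_of_not_ge fun hxp => hx (hM.1.2 p hp x hxp)
  obtain ⟨V, hV, hMV, hBV⟩ := exists_isAdmissible_embeds hext hM.1 hMx fun j hj =>
    not_not.1 fun h => hxmin j h hj
  exact hx (hBV.trans (embeds_of_le (hM.2 hV hMV)))

end Realization

end RelStruct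

open RelStruct in
/-- If an ideal `𝒜` of finite structures of signature `μ` has the extension property,
then `𝒜` is representable: there is a relational structure whose age equals `𝒜`. -/
theorem representable_of_extensionProperty {I : Type} {μ : I → ℕ}
    (𝒜 : Set (RelStruct μ)) (h𝒜 : IsIdeal 𝒜)
    (hext : ∀ A : RelStruct μ,
      Cardinal.lift.{1} (Cardinal.mk A.carrier) < numTypes 𝒜 → age A ⊆ 𝒜 →
      ∀ B ∈ 𝒜, ∃ C : RelStruct μ, age C ⊆ 𝒜 ∧ Embeds A C ∧ Embeds B C) :
    ∃ A : RelStruct μ, age A = 𝒜 := by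
  obtain ⟨hne, hfin, hdc, hdir⟩ := h𝒜
  have hage : ∀ A ∈ 𝒜, age A ⊆ 𝒜 := fun A hA C hC => hdc C A hC.1 hC.2 hA
  obtain ⟨W, B, hW, hB, hcover⟩ := exists_representatives hfin hdc
  obtain ⟨A, hA, hBA⟩ : ∃ A, age A ⊆ 𝒜 ∧ ∀ w, Embeds (B w) A := by
    cases finite_or_infinite W
    · obtain ⟨D, hD, hBD⟩ := exists_forall_embeds_of_finite hne hdir hB
      exact ⟨D, hage D hD, hBD⟩
    · obtain ⟨_, _, hord⟩ := Cardinal.exists_ord_eq_type_lt W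
      have := fun w => hfin _ (hB w)
      refine exists_age_subset_forall_embeds (fun x C hC hC𝒜 => hext C ?_ hC𝒜 _ (hB x))
        fun w => hage _ (hB w)
      have hlt : #(Σ j : Set.Iio x, (B j).carrier) < #W :=
        Cardinal.mk_sigma_lt_of_finite (Cardinal.aleph0_le_mk W) (Cardinal.mk_Iio_lt x hord)
      exact (Cardinal.lift_strictMono (hC.trans_lt hlt)).trans_le hW
  exact ⟨A, hA.antisymm fun C hC => ⟨hfin C hC, (hcover C hC).elim fun w hw => hw.trans (hBA w)⟩⟩
end

section
/- Let 𝕄 be an unbounded metric space whose isometry group acts transitively on points. Suppose for some t > 0 the set spec(𝕄) ∩ [t,∞) is uncountable and every bounded subset of 𝕄 is t-totally bounded. Then age_t(𝕄), the set of isometry types of finite subspaces of 𝕄 whose minimum nonzero distance is at least t, is an ideal that is not representable as the age of any metric space. -/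
/-- A bundled metric space (with carrier a `Type`). -/
structure MS : Type 1 where
  carrier : Type
  [str : MetricSpace carrier]

attribute [instance] MS.str

namespace MS

/-- `X` isometrically embeds into `Y`. -/
def Embeds (X Y : MS) : Prop := ∃ f : X.carrier → Y.carrier, Isometry f

/-- The age of a metric space `M`: (the isometry-closed set of) all finite metric
spaces which isometrically embed into `M`. -/
def age (M : Type*) [MetricSpace M] : Set MS :=
  {X | Finite X.carrier ∧ ∃ f : X.carrier → M, Isometry f}

/-- An ideal of (isometry types of) finite metric spaces, encoded as an
isometry-closed set of finite metric spaces which is nonempty, downward closed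
under isometric embeddability, and up-directed. -/
def IsIdeal (𝒞 : Set MS) : Prop :=
  𝒞.Nonempty ∧ (∀ X ∈ 𝒞, Finite X.carrier) ∧
  (∀ X Y : MS, Finite X.carrier → Embeds X Y → Y ∈ 𝒞 → X ∈ 𝒞) ∧
  (∀ X ∈ 𝒞, ∀ Y ∈ 𝒞, ∃ Z ∈ 𝒞, Embeds X Z ∧ Embeds Y Z)

/-- `𝒞` is representable: it is the age of some metric space. -/
def Representable (𝒞 : Set MS) : Prop :=
  ∃ (N : Type) (_ : MetricSpace N), age N = 𝒞

end MS

/-- `age_t(M)`: the isometry types of finite subspaces of `M` whose minimum nonzero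
distance is at least `t`. -/
def ageT (M : Type) [MetricSpace M] (t : ℝ) : Set MS :=
  {X : MS | Finite X.carrier ∧ (∀ x y : X.carrier, x ≠ y → t ≤ dist x y) ∧
    ∃ f : X.carrier → M, Isometry f}

/-- Let `M` be an unbounded metric space whose isometry group acts transitively on
points. If for some `t > 0` the set `spec(M) ∩ [t,∞)` is uncountable and every
bounded subset of `M` is `t`-totally bounded, then `age_t(M)` is an ideal which is
not representable as the age of any metric space. -/
theorem ageT_isIdeal_not_representable (M : Type) [MetricSpace M]
    (hub : ¬ Bornology.IsBounded (Set.univ : Set M))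
    (htrans : ∀ x y : M, ∃ e : M ≃ᵢ M, e x = y)
    (t : ℝ) (ht : 0 < t)
    (hspec : ¬ ({r : ℝ | t ≤ r ∧ ∃ x y : M, dist x y = r}).Countable)
    (htb : ∀ B : Set M, Bornology.IsBounded B → ∃ n : ℕ, ∀ Y ⊆ B,
      (Y.Pairwise fun x y => t ≤ dist x y) → Y.Finite ∧ Y.ncard ≤ n) :
    MS.IsIdeal (ageT M t) ∧ ¬ MS.Representable (ageT M t) := by
  have hMne : Nonempty M := by
    by_contra h
    rw [not_nonempty_iff] at h
    exact hub ((Set.univ_eq_empty_iff.mpr h) ▸ Bornology.isBounded_empty)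
  obtain ⟨x0⟩ := hMne
  have hunb : ∀ (a : M) (r : ℝ), ∃ p : M, r < dist p a := by
    intro a r
    by_contra h
    push_neg at h
    exact hub ((Metric.isBounded_iff_subset_closedBall a).mpr
      ⟨r, fun p _ => Metric.mem_closedBall.mpr (h p)⟩)
  constructor
  · refine ⟨⟨MS.mk PUnit, ?_⟩, fun X hX => hX.1, ?_, ?_⟩
    · refine ⟨inferInstance, fun x y h => absurd (Subsingleton.elim x y) h,
        fun _ => x0, ?_⟩
      intro a b
      rw [Subsingleton.elim a b]
      simp
    · rintro X Y hXfin ⟨f, hf⟩ ⟨hYfin, hYsep, g, hg⟩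
      refine ⟨hXfin, fun x y hxy => ?_, g ∘ f, hg.comp hf⟩
      rw [← hf.dist_eq]
      exact hYsep _ _ (fun h => hxy (hf.injective h))
    · rintro X ⟨hXfin, hXsep, f, hf⟩ Y ⟨hYfin, hYsep, g, hg⟩
      rcases isEmpty_or_nonempty X.carrier with h | hXne
      · exact ⟨Y, ⟨hYfin, hYsep, g, hg⟩, ⟨fun x => isEmptyElim x, fun x => isEmptyElim x⟩,
          ⟨id, isometry_id⟩⟩
      rcases isEmpty_or_nonempty Y.carrier with h | hYne
      · exact ⟨X, ⟨hXfin, hXsep, f, hf⟩, ⟨id, isometry_id⟩,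
          ⟨fun y => isEmptyElim y, fun y => isEmptyElim y⟩⟩
      obtain ⟨px⟩ := hXne
      obtain ⟨py⟩ := hYne
      set a := f px with ha
      set b := g py with hb
      obtain ⟨RA, hRA⟩ := ((Set.finite_range f).isBounded).subset_closedBall a
      obtain ⟨RB, hRB⟩ := ((Set.finite_range g).isBounded).subset_closedBall b
      obtain ⟨p, hp⟩ := hunb a (RA + RB + t)
      obtain ⟨e, he⟩ := htrans b p
      set g' : Y.carrier → M := fun y => e (g y) with hg'def
      have hg' : Isometry g' := e.isometry.comp hg
      set S : Set M := Set.range f ∪ Set.range g' with hSdef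
      have hSfin : S.Finite := (Set.finite_range f).union (Set.finite_range g')
      have hcross : ∀ x y, t ≤ dist (f x) (g' y) := by
        intro x y
        have h1 : dist (f x) a ≤ RA := Metric.mem_closedBall.mp (hRA (Set.mem_range_self x))
        have h2 : dist (g' y) p ≤ RB := by
          have : dist (g' y) (e b) = dist (g y) b := e.isometry.dist_eq _ _
          rw [← he, this]
          exact Metric.mem_closedBall.mp (hRB (Set.mem_range_self y))
        have h3 : dist p a ≤ dist p (g' y) + dist (g' y) (f x) + dist (f x) a :=
          dist_triangle4 _ _ _ _
        have h4 : dist p (g' y) = dist (g' y) p := dist_comm _ _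
        have h5 : dist (g' y) (f x) = dist (f x) (g' y) := dist_comm _ _
        linarith
      have hsep : ∀ z w : ↥S, z ≠ w → t ≤ dist z w := by
        rintro ⟨z, hz⟩ ⟨w, hw⟩ hne
        have hzw : z ≠ w := fun h => hne (Subtype.ext h)
        rw [Subtype.dist_eq]
        rcases hz with ⟨x, rfl⟩ | ⟨y, rfl⟩ <;> rcases hw with ⟨x', rfl⟩ | ⟨y', rfl⟩
        · have hx : x ≠ x' := fun h => hzw (by rw [h])
          rw [hf.dist_eq]
          exact hXsep _ _ hx
        · exact hcross x y'
        · rw [dist_comm]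
          exact hcross x' y
        · have hy : y ≠ y' := fun h => hzw (by rw [h])
          rw [hg'.dist_eq]
          exact hYsep _ _ hy
      refine ⟨MS.mk ↥S, ⟨hSfin.to_subtype, hsep, Subtype.val, isometry_subtype_coe⟩,
        ⟨fun x => ⟨f x, Or.inl (Set.mem_range_self x)⟩, ?_⟩,
        ⟨fun y => ⟨g' y, Or.inr (Set.mem_range_self y)⟩, ?_⟩⟩
      · refine Isometry.of_dist_eq fun x y => ?_
        rw [Subtype.dist_eq]
        exact hf.dist_eq x y
      · refine Isometry.of_dist_eq fun x y => ?_
        rw [Subtype.dist_eq]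
        exact hg'.dist_eq x y
  · rintro ⟨N, instN, hage⟩
    have hNsep : ∀ u v : N, u ≠ v → t ≤ dist u v := by
      intro u v huv
      have hfin : Finite ↥({u, v} : Set N) :=
        ((Set.finite_singleton v).insert u).to_subtype
      have hmem : MS.mk ↥({u, v} : Set N) ∈ MS.age N :=
        ⟨hfin, Subtype.val, isometry_subtype_coe⟩
      rw [hage] at hmem
      obtain ⟨_, hsep, _⟩ := hmem
      have := hsep ⟨u, Or.inl rfl⟩ ⟨v, Or.inr rfl⟩
        (by simp [Subtype.ext_iff]; exact huv)
      simpa [Subtype.dist_eq] using this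
    have hball : ∀ (u0 : N) (D : ℝ), (Metric.closedBall u0 D).Finite := by
      intro u0 D
      obtain ⟨n, hn⟩ := htb (Metric.closedBall x0 (2 * D)) Metric.isBounded_closedBall
      by_contra hinf
      obtain ⟨F, hFsub, hFfin, hFcard⟩ := Set.Infinite.exists_subset_ncard_eq hinf (n + 1)
      have hFne : F.Nonempty := Set.nonempty_of_ncard_ne_zero (by omega)
      obtain ⟨aa, haF⟩ := hFne
      have hfin : Finite ↥F := hFfin.to_subtype
      have hmem : MS.mk ↥F ∈ MS.age N := ⟨hfin, Subtype.val, isometry_subtype_coe⟩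
      rw [hage] at hmem
      obtain ⟨_, _, φ, hφ⟩ := hmem
      obtain ⟨e, he⟩ := htrans (φ ⟨aa, haF⟩) x0
      set ψ : ↥F → M := fun x => e (φ x) with hψdef
      have hψiso : Isometry ψ := e.isometry.comp hφ
      have hsub : Set.range ψ ⊆ Metric.closedBall x0 (2 * D) := by
        rintro _ ⟨x, rfl⟩
        rw [Metric.mem_closedBall, ← he]
        have h1 : dist (ψ x) (e (φ ⟨aa, haF⟩)) = dist (x : N) aa := by
          have h2 : dist (ψ x) (e (φ ⟨aa, haF⟩)) = dist (φ x) (φ ⟨aa, haF⟩) :=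
            e.isometry.dist_eq _ _
          rw [h2, hφ.dist_eq, Subtype.dist_eq]
        rw [h1]
        calc dist (x : N) aa ≤ dist (x : N) u0 + dist u0 aa := dist_triangle _ _ _
          _ ≤ D + D := add_le_add (Metric.mem_closedBall.mp (hFsub x.2))
              (by rw [dist_comm]; exact Metric.mem_closedBall.mp (hFsub haF))
          _ = 2 * D := by ring
      have hpair : (Set.range ψ).Pairwise fun x y => t ≤ dist x y := by
        rintro _ ⟨x, rfl⟩ _ ⟨y, rfl⟩ hne
        have hxy : (x : N) ≠ y := by
          intro h
          exact hne (by rw [Subtype.ext h])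
        rw [hψiso.dist_eq, Subtype.dist_eq]
        exact hNsep _ _ hxy
      have hle := (hn _ hsub hpair).2
      have hcard : (Set.range ψ).ncard = n + 1 := by
        rw [← Nat.card_coe_set_eq, Nat.card_range_of_injective hψiso.injective,
          ← hFcard, Nat.card_coe_set_eq]
      omega
    have hNcount : Countable N := by
      rcases isEmpty_or_nonempty N with h | h
      · infer_instance
      obtain ⟨u0⟩ := h
      have huniv : (Set.univ : Set N) = ⋃ k : ℕ, Metric.closedBall u0 k := by
        ext u
        simp only [Set.mem_univ, true_iff, Set.mem_iUnion, Metric.mem_closedBall]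
        exact ⟨⌈dist u u0⌉₊, Nat.le_ceil _⟩
      have hcnt : (Set.univ : Set N).Countable :=
        huniv ▸ Set.countable_iUnion (fun k => (hball u0 k).countable)
      exact Set.countable_univ_iff.mp hcnt
    apply hspec
    have hsub : {r : ℝ | t ≤ r ∧ ∃ x y : M, dist x y = r} ⊆
        Set.range (fun p : N × N => dist p.1 p.2) := by
      rintro r ⟨htr, x, y, hxy⟩
      have hfin : Finite ↥({x, y} : Set M) := ((Set.finite_singleton y).insert x).to_subtype
      have hmem : MS.mk ↥({x, y} : Set M) ∈ ageT M t := by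
        refine ⟨hfin, ?_, Subtype.val, isometry_subtype_coe⟩
        rintro ⟨z, hz⟩ ⟨w, hw⟩ hne
        have hzw : z ≠ w := fun h => hne (Subtype.ext h)
        rw [Subtype.dist_eq]
        simp only [Set.mem_insert_iff, Set.mem_singleton_iff] at hz hw
        rcases hz with rfl | rfl <;> rcases hw with rfl | rfl
        · exact absurd rfl hzw
        · rw [hxy]; exact htr
        · rw [dist_comm, hxy]; exact htr
        · exact absurd rfl hzw
      rw [← hage] at hmem
      obtain ⟨_, f, hf⟩ := hmem
      refine ⟨(f ⟨x, Or.inl rfl⟩, f ⟨y, Or.inr rfl⟩), ?_⟩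
      show dist _ _ = r
      rw [hf.dist_eq, Subtype.dist_eq]
      exact hxy
    exact Set.Countable.mono hsub (Set.countable_range _)
end

section
/- For every positive real t, the set of isometry types of finite subspaces X of the real line (with the usual metric) whose minimum nonzero distance is ≥ t is an ideal of finite metric spaces that is not representable: there is no metric space whose finite subspaces realize exactly these isometry types. -/
/-- `age_t(ℝ)`: the isometry types of finite subspaces of the real line whose minimum
nonzero distance is at least `t`. -/
def ageTReal (t : ℝ) : Set MS :=
  {X : MS | Finite X.carrier ∧ (∀ x y : X.carrier, x ≠ y → t ≤ dist x y) ∧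
    ∃ f : X.carrier → ℝ, Isometry f}

/-!
Directedness: two finite `t`-separated subsets of `ℝ` become one after translating the second far
to the right of the first.

Non-representability: if `age N = age_t(ℝ)`, then every finite subset of a closed ball of radius
`r` in `N`, together with the centre, embeds into an interval of length `2r` of `ℝ` as a
`t`-separated set, so it has at most `2r/t + 1` points. Hence closed balls of `N` are finite and
`N` is countable, so `N` realizes only countably many distances; but every `d ≥ t` is realized,
by the image of `{0, d}`.
-/

open Set Metric

theorem Real.card_le_of_pairwise_le_dist {s : Finset ℝ} {t a b : ℝ} (ht : 0 < t)
    (hsep : (s : Set ℝ).Pairwise (t ≤ dist · ·)) (hs : (s : Set ℝ) ⊆ Icc a b) :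
    s.card ≤ ⌊(b - a) / t⌋₊ + 1 := by
  set φ : ℝ → ℕ := fun x => ⌊(x - a) / t⌋₊
  have hmaps : MapsTo φ s (Finset.range (⌊(b - a) / t⌋₊ + 1)) := by
    intro x hx
    rw [Finset.coe_range, mem_Iio, Nat.lt_succ_iff]
    exact Nat.floor_le_floor (by gcongr; exact (hs hx).2)
  have hinj : InjOn φ s := by
    intro x hx y hy hxy
    by_contra hne
    have hnonneg : ∀ z ∈ (s : Set ℝ), 0 ≤ (z - a) / t := fun z hz =>
      div_nonneg (sub_nonneg.2 (hs hz).1) ht.le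
    have hfloor : ⌊(x - a) / t⌋ = ⌊(y - a) / t⌋ := by
      rw [← Int.natCast_floor_eq_floor (hnonneg x hx), ← Int.natCast_floor_eq_floor (hnonneg y hy)]
      exact congrArg _ hxy
    have hlt : |x - y| < t := by
      have := Int.abs_sub_lt_one_of_floor_eq_floor hfloor
      rwa [← sub_div, sub_sub_sub_cancel_right, abs_div, abs_of_pos ht, div_lt_one ht] at this
    exact (hsep hx hy hne).not_gt hlt
  simpa using Finset.card_le_card_of_injOn φ hmaps hinj

theorem Real.exists_pairwise_le_dist_union_image_add_right {t : ℝ} {A B : Set ℝ}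
    (hA : BddAbove A) (hB : BddBelow B) (hAsep : A.Pairwise (t ≤ dist · ·))
    (hBsep : B.Pairwise (t ≤ dist · ·)) :
    ∃ c : ℝ, (A ∪ (· + c) '' B).Pairwise (t ≤ dist · ·) := by
  obtain ⟨M, hM⟩ := hA
  obtain ⟨m, hm⟩ := hB
  refine ⟨M + t - m, pairwise_union.2 ⟨hAsep, ?_, ?_⟩⟩
  · rw [(add_left_injective _).injOn.pairwise_image]
    intro x hx y hy hxy
    simpa [Function.onFun, dist_add_right] using hBsep hx hy hxy
  · rintro x hx _ ⟨y, hy, rfl⟩ -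
    have hxy : x + t ≤ y + (M + t - m) := by linarith [hM hx, hm hy]
    rw [dist_comm, and_self, Real.dist_eq]
    exact le_abs.2 (Or.inl (by linarith))

theorem MS.embeds_mk_of_range_subset {X : MS} {M : Type} [MetricSpace M] {f : X.carrier → M}
    (hf : Isometry f) {S : Set M} (hS : range f ⊆ S) : X.Embeds (MS.mk S) :=
  ⟨codRestrict f S fun x => hS ⟨x, rfl⟩, hf⟩

theorem MS.mk_mem_age {N : Type} [MetricSpace N] {S : Set N} (hS : S.Finite) :
    MS.mk S ∈ MS.age N :=
  ⟨hS.to_subtype, Subtype.val, isometry_subtype_coe⟩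

theorem mk_mem_ageTReal {t : ℝ} {S : Set ℝ} (hS : S.Finite) (hsep : S.Pairwise (t ≤ dist · ·)) :
    MS.mk S ∈ ageTReal t :=
  ⟨hS.to_subtype, fun x y hxy => hsep x.2 y.2 (Subtype.coe_ne_coe.2 hxy), Subtype.val,
    isometry_subtype_coe⟩

theorem Isometry.pairwise_le_dist_range {X Y : Type*} [PseudoMetricSpace X]
    [PseudoMetricSpace Y] {t : ℝ} {f : X → Y} (hf : Isometry f)
    (hsep : Pairwise fun x y : X => t ≤ dist x y) : (range f).Pairwise (t ≤ dist · ·) := by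
  rintro _ ⟨x, rfl⟩ _ ⟨y, rfl⟩ hxy
  rw [hf.dist_eq]
  exact hsep fun h => hxy (congrArg f h)

theorem mem_ageTReal_of_embeds {t : ℝ} {X Y : MS} (hX : Finite X.carrier) (hXY : X.Embeds Y)
    (hY : Y ∈ ageTReal t) : X ∈ ageTReal t := by
  obtain ⟨f, hf⟩ := hXY
  obtain ⟨-, hsep, g, hg⟩ := hY
  refine ⟨hX, fun x y hxy => ?_, g ∘ f, hg.comp hf⟩
  rw [← hf.dist_eq]
  exact hsep _ _ (hf.injective.ne hxy)

theorem ageTReal_directed {t : ℝ} {X Y : MS} (hX : X ∈ ageTReal t) (hY : Y ∈ ageTReal t) :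
    ∃ Z ∈ ageTReal t, X.Embeds Z ∧ Y.Embeds Z := by
  obtain ⟨_, hXsep, f, hf⟩ := hX
  obtain ⟨_, hYsep, g, hg⟩ := hY
  obtain ⟨c, hsep⟩ := Real.exists_pairwise_le_dist_union_image_add_right
    (finite_range f).bddAbove (finite_range g).bddBelow
    (hf.pairwise_le_dist_range fun x y => hXsep x y)
    (hg.pairwise_le_dist_range fun x y => hYsep x y)
  refine ⟨_, mk_mem_ageTReal ((finite_range f).union ((finite_range g).image _)) hsep,
    MS.embeds_mk_of_range_subset hf subset_union_left,
    MS.embeds_mk_of_range_subset ((IsometryEquiv.addRight c).isometry.comp hg) ?_⟩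
  rw [range_comp]
  exact subset_union_right

theorem ageTReal_isIdeal (t : ℝ) : MS.IsIdeal (ageTReal t) :=
  ⟨⟨_, mk_mem_ageTReal finite_empty (pairwise_empty _)⟩, fun _ hX => hX.1,
    fun _ _ hX hXY hY => mem_ageTReal_of_embeds hX hXY hY,
    fun _ hX _ hY => ageTReal_directed hX hY⟩

section NotRepresentable

variable {t : ℝ} {N : Type} [MetricSpace N]

theorem exists_dist_eq_of_ageTReal_subset_age (hN : ageTReal t ⊆ MS.age N) (ht : 0 ≤ t)
    {d : ℝ} (hd : t ≤ d) : ∃ x y : N, dist x y = d := by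
  have hdist : dist 0 d = d := by
    rw [dist_comm, Real.dist_eq, sub_zero, abs_of_nonneg (ht.trans hd)]
  have hpair : ({0, d} : Set ℝ).Pairwise (t ≤ dist · ·) :=
    pairwise_pair.2 fun _ => by rw [dist_comm d, hdist, and_self]; exact hd
  obtain ⟨-, f, hf⟩ := hN (mk_mem_ageTReal (toFinite _) hpair)
  exact ⟨f ⟨0, .inl rfl⟩, f ⟨d, .inr rfl⟩, (hf.dist_eq _ _).trans hdist⟩

theorem card_le_of_age_subset_ageTReal (hN : MS.age N ⊆ ageTReal t) (ht : 0 < t)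
    {F : Finset N} {p : N} {r : ℝ} (hr : 0 ≤ r) (hF : (F : Set N) ⊆ closedBall p r) :
    F.card ≤ ⌊2 * r / t⌋₊ + 1 := by
  classical
  set G := insert p F
  obtain ⟨-, hsep, f, hf⟩ := hN (MS.mk_mem_age G.finite_toSet)
  let p' : (G : Set N) := ⟨p, F.mem_insert_self p⟩
  have hbound : ((Finset.univ.image f : Finset ℝ) : Set ℝ) ⊆ Icc (f p' - r) (f p' + r) := by
    intro y hy
    obtain ⟨x, -, rfl⟩ := Finset.mem_image.1 hy
    have hxp : dist x p' ≤ r := by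
      change dist (x : N) p ≤ r
      rcases Finset.mem_insert.1 x.2 with hx | hx
      · rwa [hx, dist_self]
      · exact hF hx
    rw [← hf.dist_eq, Real.dist_eq, abs_sub_le_iff] at hxp
    constructor <;> linarith
  calc F.card ≤ G.card := F.card_le_card (F.subset_insert p)
    _ = (Finset.univ.image f).card := by
      rw [Finset.card_image_of_injective _ hf.injective, Finset.card_univ]
      exact (Fintype.card_coe G).symm
    _ ≤ ⌊2 * r / t⌋₊ + 1 := by
      convert Real.card_le_of_pairwise_le_dist ht ?_ hbound using 4
      · ring
      · simpa using hf.pairwise_le_dist_range fun x y => hsep x y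

theorem finite_closedBall_of_age_subset_ageTReal (hN : MS.age N ⊆ ageTReal t) (ht : 0 < t)
    (p : N) (r : ℝ) : (closedBall p r).Finite := by
  by_contra hinf
  have hr := nonempty_closedBall.1 (Set.Infinite.nonempty hinf)
  obtain ⟨F, hF, hcard⟩ := Set.Infinite.exists_subset_card_eq hinf (⌊2 * r / t⌋₊ + 2)
  have := card_le_of_age_subset_ageTReal hN ht hr hF
  omega

theorem countable_of_age_subset_ageTReal (hN : MS.age N ⊆ ageTReal t) (ht : 0 < t) :
    Countable N := by
  rcases isEmpty_or_nonempty N with _ | ⟨⟨p⟩⟩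
  · infer_instance
  rw [← countable_univ_iff, ← iUnion_closedBall_nat p]
  exact countable_iUnion fun n => (finite_closedBall_of_age_subset_ageTReal hN ht p n).countable

end NotRepresentable

theorem not_representable_ageTReal {t : ℝ} (ht : 0 < t) : ¬ MS.Representable (ageTReal t) := by
  rintro ⟨N, _, hN⟩
  have : Countable N := countable_of_age_subset_ageTReal hN.subset ht
  have hdist : Ici t ⊆ range fun q : N × N => dist q.1 q.2 := fun d hd =>
    let ⟨x, y, hxy⟩ := exists_dist_eq_of_ageTReal_subset_age hN.superset ht.le hd
    ⟨(x, y), hxy⟩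
  have hcount : (Ici t).Countable := (countable_range _).mono hdist
  exact (Cardinal.mk_Ici_real t ▸ hcount.le_aleph0).not_gt Cardinal.aleph0_lt_continuum

/-- For every positive real `t`, the set of isometry types of finite subspaces of the
real line with minimum nonzero distance ≥ t is an ideal of finite metric spaces which
is not representable as the age of any metric space. -/
theorem ageTReal_isIdeal_not_representable (t : ℝ) (ht : 0 < t) :
    MS.IsIdeal (ageTReal t) ∧ ¬ MS.Representable (ageTReal t) :=
  ⟨ageTReal_isIdeal t, not_representable_ageTReal ht⟩
end

section
/- For every subset A ⊆ ℝ₊* of cardinality less than the continuum, there exists a subset X ⊆ ℝ such that the set of isometry types of finite subspaces of X equals the set of isometry types of finite subsets of ℝ all of whose pairwise distances avoid A. -/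
open Cardinal Set Ordinal

namespace AgeOmit

noncomputable section

abbrev I : Type := Cardinal.continuum.ord.ToType

noncomputable def σ : I ≃ (ℕ → ℝ) := by
  apply Classical.choice
  rw [← Cardinal.eq, Cardinal.mk_toType, Cardinal.card_ord, Cardinal.mk_arrow]
  simp [Cardinal.mk_real, Cardinal.continuum_power_aleph0]

variable (A : Set ℝ)

def Good (S : Set ℝ) : Prop := ∀ x ∈ S, ∀ y ∈ S, |x - y| ∉ A

open Classical in
def F (i : I) : Set ℝ :=
  if (Set.range (σ i)).Finite ∧ Good A (Set.range (σ i)) then Set.range (σ i) else ∅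

lemma F_sub (i : I) : F A i ⊆ Set.range (σ i) := by
  unfold F; split_ifs <;> simp

lemma F_finite (i : I) : (F A i).Finite := by
  unfold F; split_ifs with h
  · exact h.1
  · exact finite_empty

lemma F_good (i : I) : Good A (F A i) := by
  unfold F; split_ifs with h
  · exact h.2
  · intro x hx; simp at hx

lemma F_surj {S : Set ℝ} (hfin : S.Finite) (hgood : Good A S) (hne : S.Nonempty) :
    ∃ i, F A i = S := by
  obtain ⟨f, hf⟩ := hfin.countable.exists_eq_range hne
  obtain ⟨i, hi⟩ := σ.surjective f
  refine ⟨i, ?_⟩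
  rw [F, hi, ← hf, if_pos ⟨hfin, hgood⟩]

/-- the set of forbidden translation parameters at stage `i` -/
def bad (i : I) (rec : ∀ j, j < i → ℝ) : Set ℝ :=
  {t | ∃ a ∈ A, ∃ j, ∃ hj : j < i, ∃ x ∈ F A i, ∃ y ∈ F A j,
    t = a + (y + rec j hj) - x ∨ t = -a + (y + rec j hj) - x}

lemma exists_not_bad (hcard : #A < 𝔠) (i : I) (rec : ∀ j, j < i → ℝ) :
    ∃ t : ℝ, t ∉ bad A i rec := by
  have hsub : bad A i rec ⊆ Set.range
      (fun p : A × (Set.Iio i) × ℕ × ℕ × Bool =>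
        (cond p.2.2.2.2 (p.1 : ℝ) (-(p.1 : ℝ))) + (σ p.2.1 p.2.2.2.1 + rec p.2.1 p.2.1.2)
          - σ i p.2.2.1) := by
    rintro t ⟨a, ha, j, hj, x, hx, y, hy, ht⟩
    obtain ⟨m, hm⟩ := F_sub A i hx
    obtain ⟨n, hn⟩ := F_sub A j hy
    rcases ht with ht | ht
    · exact ⟨⟨⟨a, ha⟩, ⟨j, hj⟩, m, n, true⟩, by simp [hm, hn, ht.symm]⟩
    · exact ⟨⟨⟨a, ha⟩, ⟨j, hj⟩, m, n, false⟩, by simp [hm, hn, ht.symm]⟩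
  have h𝔠 := Cardinal.aleph0_le_continuum
  have hN : #ℕ < 𝔠 := Cardinal.aleph0_lt_continuum.trans_le' (by simp)
  have hlt : #(bad A i rec) < 𝔠 := by
    refine lt_of_le_of_lt ((Cardinal.mk_le_mk_of_subset hsub).trans (Cardinal.mk_range_le)) ?_
    simp only [Cardinal.mk_prod, Cardinal.lift_id]
    refine Cardinal.mul_lt_of_lt h𝔠 hcard ?_
    refine Cardinal.mul_lt_of_lt h𝔠 (Cardinal.mk_Iio_ord_toType i) ?_
    refine Cardinal.mul_lt_of_lt h𝔠 hN ?_
    refine Cardinal.mul_lt_of_lt h𝔠 hN ?_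
    exact lt_of_lt_of_le (Cardinal.lt_aleph0_of_finite Bool) h𝔠
  by_contra h
  push_neg at h
  have hle : #ℝ ≤ #(bad A i rec) :=
    Cardinal.mk_le_of_injective (f := fun t : ℝ => (⟨t, h t⟩ : bad A i rec))
      (fun a b hab => by simpa using hab)
  rw [Cardinal.mk_real] at hle
  exact absurd (hle.trans_lt hlt) (lt_irrefl _)

/-- the translation parameters, chosen by transfinite recursion -/
def c (hcard : #A < 𝔠) : I → ℝ :=
  (IsWellFounded.wf (α := I) (r := (· < ·))).fix
    (fun i rec => Classical.choose (exists_not_bad A hcard i rec))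

lemma c_spec (hcard : #A < 𝔠) (i : I) :
    c A hcard i ∉ bad A i (fun j _ => c A hcard j) := by
  have heq := (IsWellFounded.wf (α := I) (r := (· < ·))).fix_eq
    (fun i rec => Classical.choose (exists_not_bad A hcard i rec)) i
  rw [show c A hcard i = _ from heq]
  exact Classical.choose_spec (exists_not_bad A hcard i _)

lemma cross (hcard : #A < 𝔠) {i j : I} (hj : j < i) {x y : ℝ}
    (hx : x ∈ F A i) (hy : y ∈ F A j) :
    |(x + c A hcard i) - (y + c A hcard j)| ∉ A := by
  intro habs
  apply c_spec A hcard i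
  set d := (x + c A hcard i) - (y + c A hcard j) with hd
  refine ⟨|d|, habs, j, hj, x, hx, y, hy, ?_⟩
  rcases abs_cases d with ⟨h1, _⟩ | ⟨h1, _⟩
  · left; rw [h1, hd]; ring
  · right; rw [h1, hd]; ring

def X (hcard : #A < 𝔠) : Set ℝ := ⋃ i, (fun t => t + c A hcard i) '' F A i

lemma X_good (hcard : #A < 𝔠) :
    ∀ p ∈ X A hcard, ∀ q ∈ X A hcard, |p - q| ∉ A := by
  rintro p hp q hq
  simp only [X, mem_iUnion, mem_image] at hp hq
  obtain ⟨i, x, hx, rfl⟩ := hp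
  obtain ⟨j, y, hy, rfl⟩ := hq
  rcases lt_trichotomy j i with h | rfl | h
  · exact cross A hcard h hx hy
  · have he : x + c A hcard j - (y + c A hcard j) = x - y := by ring
    rw [he]
    exact F_good A j x hx y hy
  · rw [abs_sub_comm]
    exact cross A hcard h hy hx

lemma mem_X (hcard : #A < 𝔠) {i : I} {x : ℝ} (hx : x ∈ F A i) :
    x + c A hcard i ∈ X A hcard :=
  Set.mem_iUnion.2 ⟨i, Set.mem_image_of_mem _ hx⟩

end
end AgeOmit

/-- For every set `A` of positive reals of cardinality less than the continuum there
is a subset `X ⊆ ℝ` whose age (the isometry types of its finite subspaces) is exactly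
`age_{-A}(ℝ)`, the set of isometry types of finite subsets of `ℝ` all of whose
distances avoid `A`. -/
theorem age_omitting_distances_representable (A : Set ℝ) (hA : A ⊆ Set.Ioi (0 : ℝ))
    (hcard : Cardinal.mk A < Cardinal.continuum) :
    ∃ X : Set ℝ, MS.age ↥X =
      {Y : MS | Finite Y.carrier ∧ (∃ f : Y.carrier → ℝ, Isometry f) ∧
        ∀ a b : Y.carrier, dist a b ∉ A} := by
  refine ⟨AgeOmit.X A hcard, ?_⟩
  ext Y
  simp only [MS.age, Set.mem_setOf_eq]
  constructor
  · rintro ⟨hfin, f, hf⟩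
    refine ⟨hfin, ⟨fun a => (f a : ℝ), isometry_subtype_coe.comp hf⟩, ?_⟩
    intro a b
    have : dist a b = |((f a : ℝ)) - ((f b : ℝ))| := by
      rw [← hf.dist_eq a b, Subtype.dist_eq, Real.dist_eq]
    rw [this]
    exact AgeOmit.X_good A hcard _ (f a).2 _ (f b).2
  · rintro ⟨hfin, ⟨f, hf⟩, hd⟩
    refine ⟨hfin, ?_⟩
    rcases isEmpty_or_nonempty Y.carrier with hY | hY
    · exact ⟨fun a => isEmptyElim a, fun a => isEmptyElim a⟩
    · have hSfin : (Set.range f).Finite := Set.finite_range f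
      have hSgood : AgeOmit.Good A (Set.range f) := by
        rintro x ⟨a, rfl⟩ y ⟨b, rfl⟩
        have : |f a - f b| = dist a b := by rw [← Real.dist_eq, hf.dist_eq]
        rw [this]; exact hd a b
      obtain ⟨i, hi⟩ := AgeOmit.F_surj A hSfin hSgood (Set.range_nonempty f)
      refine ⟨fun a => ⟨f a + AgeOmit.c A hcard i, AgeOmit.mem_X A hcard (hi ▸ Set.mem_range_self a)⟩, ?_⟩
      apply Isometry.of_dist_eq
      intro a b
      rw [Subtype.dist_eq]
      simp only [Real.dist_eq]
      have : f a + AgeOmit.c A hcard i - (f b + AgeOmit.c A hcard i) = f a - f b := by ring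
      rw [this, ← Real.dist_eq, hf.dist_eq]
end

section
/- Let V be the union of spectra of members of an ideal 𝒞 of finite subspaces of ℝ containing at least a 3-element space, and suppose 𝒞 has the 2-amalgamation property. Then G := V ∪ (−V) is an additive subgroup of ℝ. -/
namespace SpecAux

variable (𝒞 : Set MS)

def V : Set ℝ := {r : ℝ | ∃ Y ∈ 𝒞, ∃ x y : Y.carrier, dist x y = r}

def Pts (S : Set ℝ) : Prop := ∃ W ∈ 𝒞, ∃ g : S → W.carrier, Isometry g

variable {𝒞}

lemma pts_mono {S T : Set ℝ} (hTS : T ⊆ S) (h : Pts 𝒞 S) : Pts 𝒞 T := by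
  obtain ⟨W, hW, g, hg⟩ := h
  refine ⟨W, hW, fun t => g ⟨t.1, hTS t.2⟩, Isometry.of_dist_eq fun a b => ?_⟩
  rw [hg.dist_eq, Subtype.dist_eq, Subtype.dist_eq]

lemma pts_image {W : MS} (hW : W ∈ 𝒞) {k : W.carrier → ℝ} (hk : Isometry k)
    {S : Set ℝ} (hS : S ⊆ Set.range k) : Pts 𝒞 S := by
  refine ⟨W, hW, fun t => (hS t.2).choose, Isometry.of_dist_eq fun a b => ?_⟩
  have h1 : dist ((hS a.2).choose) ((hS b.2).choose)
      = dist (k (hS a.2).choose) (k (hS b.2).choose) := (hk.dist_eq _ _).symm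
  rw [h1, (hS a.2).choose_spec, (hS b.2).choose_spec, Subtype.dist_eq]

lemma pts_affine {S : Set ℝ} {ε c : ℝ} (hε : ε = 1 ∨ ε = -1) (h : Pts 𝒞 S) :
    Pts 𝒞 ((fun t => ε * t + c) '' S) := by
  obtain ⟨W, hW, g, hg⟩ := h
  have hmem : ∀ u : ℝ, u ∈ (fun t => ε * t + c) '' S → ε * (u - c) ∈ S := by
    rintro u ⟨t, ht, rfl⟩
    have : ε * (ε * t + c - c) = t := by rcases hε with h|h <;> rw [h] <;> ring
    rwa [this]
  refine ⟨W, hW, fun u => g ⟨ε * (u.1 - c), hmem u.1 u.2⟩, Isometry.of_dist_eq fun a b => ?_⟩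
  rw [hg.dist_eq, Subtype.dist_eq, Subtype.dist_eq, Real.dist_eq, Real.dist_eq]
  have h2 : ε*(a.1-c) - ε*(b.1-c) = ε*(a.1-b.1) := by ring
  rw [h2, abs_mul]
  rcases hε with h|h <;> simp [h]

lemma mem_V_of_pts {S : Set ℝ} (h : Pts 𝒞 S) {a b : ℝ} (ha : a ∈ S) (hb : b ∈ S) :
    |a - b| ∈ V 𝒞 := by
  obtain ⟨W, hW, g, hg⟩ := h
  exact ⟨W, hW, g ⟨a, ha⟩, g ⟨b, hb⟩, by rw [hg.dist_eq, Subtype.dist_eq, Real.dist_eq]⟩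

lemma isom_affine {S : Set ℝ} {x y : ℝ} (hx : x ∈ S) (hy : y ∈ S) (hxy : x ≠ y)
    (f : S → ℝ) (hf : Isometry f) :
    ∃ ε c : ℝ, (ε = 1 ∨ ε = -1) ∧ ∀ t : S, f t = ε * t.1 + c := by
  have hd : ∀ a b : S, |f a - f b| = |(a:ℝ) - (b:ℝ)| := by
    intro a b
    have := hf.dist_eq a b
    rwa [Real.dist_eq, Subtype.dist_eq, Real.dist_eq] at this
  set X := f ⟨x, hx⟩ with hX
  set Y := f ⟨y, hy⟩ with hY
  have h1 : |Y - X| = |y - x| := hd ⟨y,hy⟩ ⟨x,hx⟩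
  have hyx : y - x ≠ 0 := sub_ne_zero_of_ne (Ne.symm hxy)
  rcases abs_eq_abs.mp h1 with h2 | h2
  · refine ⟨1, X - x, Or.inl rfl, fun t => ?_⟩
    have e1 : (f t - X)^2 = ((t:ℝ) - x)^2 := by
      rw [← sq_abs (f t - X), ← sq_abs ((t:ℝ) - x), hd t ⟨x,hx⟩]
    have e2 : (f t - Y)^2 = ((t:ℝ) - y)^2 := by
      rw [← sq_abs (f t - Y), ← sq_abs ((t:ℝ) - y), hd t ⟨y,hy⟩]
    have key : (y - x) * (f t - ((t:ℝ) + (X - x))) = 0 := by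
      linear_combination (1/2) * e1 - (1/2) * e2 - (1/2) * (2 * f t - X - Y - y + x) * h2
    have := (mul_eq_zero.mp key).resolve_left hyx
    linarith [this]
  · refine ⟨-1, X + x, Or.inr rfl, fun t => ?_⟩
    have e1 : (f t - X)^2 = ((t:ℝ) - x)^2 := by
      rw [← sq_abs (f t - X), ← sq_abs ((t:ℝ) - x), hd t ⟨x,hx⟩]
    have e2 : (f t - Y)^2 = ((t:ℝ) - y)^2 := by
      rw [← sq_abs (f t - Y), ← sq_abs ((t:ℝ) - y), hd t ⟨y,hy⟩]
    have key : (y - x) * (f t - (-(t:ℝ) + (X + x))) = 0 := by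
      linear_combination (-1/2) * e1 + (1/2) * e2 + (1/2) * (2 * f t - X - Y + y - x) * h2
    have := (mul_eq_zero.mp key).resolve_left hyx
    linarith [this]

end SpecAux

namespace SpecAux

variable {𝒞 : Set MS}

def Amal (𝒞 : Set MS) : Prop :=
  ∀ Z : MS, Finite Z.carrier → Nat.card Z.carrier ≤ 2 →
      ∀ Y₁ ∈ 𝒞, ∀ Y₂ ∈ 𝒞,
      ∀ (f₁ : Z.carrier → Y₁.carrier) (f₂ : Z.carrier → Y₂.carrier),
        Isometry f₁ → Isometry f₂ →
        ∃ W ∈ 𝒞, ∃ (g₁ : Y₁.carrier → W.carrier) (g₂ : Y₂.carrier → W.carrier),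
          Isometry g₁ ∧ Isometry g₂ ∧ g₁ ∘ f₁ = g₂ ∘ f₂

lemma pts_swap (hA : Amal 𝒞) (hsub : 𝒞 ⊆ MS.age ℝ) {S : Set ℝ} (h : Pts 𝒞 S)
    {x y : ℝ} (hx : x ∈ S) (hy : y ∈ S) (hxy : x ≠ y) :
    Pts 𝒞 (S ∪ (fun t => x + y - t) '' S) := by
  classical
  obtain ⟨W, hW, g, hg⟩ := h
  set Z : MS := MS.mk (↥({x, y} : Set ℝ)) with hZ
  haveI hfin : Finite Z.carrier := ((Set.finite_singleton y).insert x).to_subtype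
  have hcard : Nat.card Z.carrier ≤ 2 := by
    show Nat.card (↥({x, y} : Set ℝ)) ≤ 2
    rw [Nat.card_coe_set_eq]
    exact (Set.ncard_insert_le x {y}).trans (by simp)
  have hsubxy : ({x, y} : Set ℝ) ⊆ S := by
    rintro z (rfl | rfl)
    · exact hx
    · exact hy
  have hσmem : ∀ z : ℝ, z ∈ ({x, y} : Set ℝ) → x + y - z ∈ ({x, y} : Set ℝ) := by
    rintro z (rfl | rfl)
    · right; simp
    · left; simp
  set f₁ : Z.carrier → W.carrier := fun z => g ⟨z.1, hsubxy z.2⟩ with hf₁def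
  set f₂ : Z.carrier → W.carrier := fun z => g ⟨x + y - z.1, hsubxy (hσmem z.1 z.2)⟩ with hf₂def
  have hf₁ : Isometry f₁ := Isometry.of_dist_eq fun a b => by
    rw [hf₁def, hg.dist_eq, Subtype.dist_eq, Subtype.dist_eq]
  have hf₂ : Isometry f₂ := Isometry.of_dist_eq fun a b => by
    rw [hf₂def, hg.dist_eq, Subtype.dist_eq, Subtype.dist_eq, Real.dist_eq, Real.dist_eq]
    rw [show x + y - a.1 - (x + y - b.1) = -(a.1 - b.1) by ring, abs_neg]
  obtain ⟨W', hW', g₁, g₂, hg₁, hg₂, hcomm⟩ := hA Z hfin hcard W hW W hW f₁ f₂ hf₁ hf₂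
  obtain ⟨_, k, hk⟩ := hsub hW'
  set φ : S → ℝ := fun t => k (g₁ (g t)) with hφdef
  set ψ : S → ℝ := fun t => k (g₂ (g t)) with hψdef
  have hφ : Isometry φ := hk.comp (hg₁.comp hg)
  have hψ : Isometry ψ := hk.comp (hg₂.comp hg)
  have hcx : φ ⟨x, hx⟩ = ψ ⟨y, hy⟩ := by
    have h0 := congrFun hcomm (⟨x, Or.inl rfl⟩ : Z.carrier)
    have e : (⟨x + y - x, hsubxy (hσmem x (Or.inl rfl))⟩ : S) = ⟨y, hy⟩ :=
      Subtype.ext (by ring)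
    show k (g₁ (g ⟨x, hx⟩)) = k (g₂ (g ⟨y, hy⟩))
    rw [← e]
    exact congrArg k h0
  have hcy : φ ⟨y, hy⟩ = ψ ⟨x, hx⟩ := by
    have h0 := congrFun hcomm (⟨y, Or.inr rfl⟩ : Z.carrier)
    have e : (⟨x + y - y, hsubxy (hσmem y (Or.inr rfl))⟩ : S) = ⟨x, hx⟩ :=
      Subtype.ext (by ring)
    show k (g₁ (g ⟨y, hy⟩)) = k (g₂ (g ⟨x, hx⟩))
    rw [← e]
    exact congrArg k h0
  obtain ⟨ε, c, hε, hφa⟩ := isom_affine hx hy hxy φ hφ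
  obtain ⟨ε', c', hε', hψa⟩ := isom_affine hx hy hxy ψ hψ
  have h1 : ε * x + c = ε' * y + c' := by rw [← hφa ⟨x,hx⟩, ← hψa ⟨y,hy⟩]; exact hcx
  have h2 : ε * y + c = ε' * x + c' := by rw [← hφa ⟨y,hy⟩, ← hψa ⟨x,hx⟩]; exact hcy
  have hee : (ε + ε') * (x - y) = 0 := by linear_combination h1 - h2
  have hε'e : ε' = -ε := by
    have := (mul_eq_zero.mp hee).resolve_right (sub_ne_zero_of_ne hxy)
    linarith
  have hc' : c' = ε * (x + y) + c := by rw [hε'e] at h1; linarith [h1]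
  have hψ' : ∀ t : S, ψ t = ε * (x + y - t.1) + c := by
    intro t; rw [hψa t, hε'e, hc']; ring
  have hmem2 : ∀ u : ℝ, u ∈ S ∪ (fun t => x + y - t) '' S → u ∉ S → x + y - u ∈ S := by
    intro u hu hnu
    rcases hu with h | ⟨t, ht, rfl⟩
    · exact absurd h hnu
    · rwa [show x + y - (x + y - t) = t by ring]
  set H : ↥(S ∪ (fun t => x + y - t) '' S) → W'.carrier := fun u =>
    if h : u.1 ∈ S then g₁ (g ⟨u.1, h⟩) else g₂ (g ⟨x + y - u.1, hmem2 u.1 u.2 h⟩) with hHdef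
  have hkey : ∀ u : ↥(S ∪ (fun t => x + y - t) '' S), k (H u) = ε * u.1 + c := by
    intro u
    rw [hHdef]
    by_cases h : u.1 ∈ S
    · simp only [dif_pos h]
      exact hφa ⟨u.1, h⟩
    · simp only [dif_neg h]
      have h5 := hψ' ⟨x + y - u.1, hmem2 u.1 u.2 h⟩
      show ψ ⟨x + y - u.1, hmem2 u.1 u.2 h⟩ = ε * u.1 + c
      rw [h5]; ring
  refine ⟨W', hW', H, Isometry.of_dist_eq fun a b => ?_⟩
  calc dist (H a) (H b) = dist (k (H a)) (k (H b)) := (hk.dist_eq _ _).symm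
    _ = |(ε * a.1 + c) - (ε * b.1 + c)| := by rw [hkey a, hkey b, Real.dist_eq]
    _ = |ε| * |a.1 - b.1| := by
        rw [show ε * a.1 + c - (ε * b.1 + c) = ε * (a.1 - b.1) by ring, abs_mul]
    _ = dist a b := by
        rw [Subtype.dist_eq, Real.dist_eq]
        rcases hε with h|h <;> simp [h]

end SpecAux

namespace SpecAux

variable {𝒞 : Set MS}

lemma pts_glue (hA : Amal 𝒞) (hsub : 𝒞 ⊆ MS.age ℝ) {r s : ℝ}
    (hr : r ∈ V 𝒞) (hs : s ∈ V 𝒞) :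
    ∃ a b c : ℝ, |a - b| = r ∧ |b - c| = s ∧ Pts 𝒞 {a, b, c} := by
  obtain ⟨Y₁, hY₁, x₁, y₁, hd₁⟩ := hr
  obtain ⟨Y₂, hY₂, x₂, y₂, hd₂⟩ := hs
  set Z : MS := MS.mk (↥({(0:ℝ)} : Set ℝ)) with hZ
  haveI hfin : Finite Z.carrier := (Set.finite_singleton (0:ℝ)).to_subtype
  have hcard : Nat.card Z.carrier ≤ 2 := by
    show Nat.card (↥({(0:ℝ)} : Set ℝ)) ≤ 2
    rw [Nat.card_coe_set_eq, Set.ncard_singleton]; norm_num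
  haveI hss : Subsingleton Z.carrier :=
    ⟨fun a b => Subtype.ext (by
      have ha : a.1 ∈ ({(0:ℝ)} : Set ℝ) := a.2
      have hb : b.1 ∈ ({(0:ℝ)} : Set ℝ) := b.2
      simp only [Set.mem_singleton_iff] at ha hb
      rw [ha, hb])⟩
  have hf₁ : Isometry (fun _ : Z.carrier => y₁) := Isometry.of_dist_eq fun a b => by
    rw [Subsingleton.elim a b]; simp
  have hf₂ : Isometry (fun _ : Z.carrier => x₂) := Isometry.of_dist_eq fun a b => by
    rw [Subsingleton.elim a b]; simp
  obtain ⟨W, hW, g₁, g₂, hg₁, hg₂, hcomm⟩ :=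
    hA Z hfin hcard Y₁ hY₁ Y₂ hY₂ _ _ hf₁ hf₂
  obtain ⟨_, k, hk⟩ := hsub hW
  refine ⟨k (g₁ x₁), k (g₁ y₁), k (g₂ y₂), ?_, ?_, ?_⟩
  · rw [← Real.dist_eq, hk.dist_eq, hg₁.dist_eq, hd₁]
  · have hb : g₁ y₁ = g₂ x₂ := congrFun hcomm ⟨0, rfl⟩
    rw [← Real.dist_eq, hb, hk.dist_eq, hg₂.dist_eq, hd₂]
  · apply pts_image hW hk
    rintro t (rfl | rfl | rfl)
    · exact ⟨_, rfl⟩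
    · exact ⟨_, rfl⟩
    · exact ⟨_, rfl⟩

lemma pts_normalize {r s a b c : ℝ} (hr : 0 < r)
    (h1 : |a - b| = r) (h2 : |b - c| = s) (h : Pts 𝒞 {a, b, c}) :
    Pts 𝒞 {0, r, r + s} ∨ Pts 𝒞 {0, r, r - s} := by
  have hs0 : 0 ≤ s := h2 ▸ abs_nonneg _
  have hba : b - a = r ∨ b - a = -r := by
    rcases (abs_eq hr.le).mp h1 with h | h
    · right; linarith
    · left; linarith
  have main : ∀ z : ℝ, Pts 𝒞 {0, r, z} → |z - r| = s → Pts 𝒞 {0, r, r + s} ∨ Pts 𝒞 {0, r, r - s} := by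
    intro z hz hzr
    rcases (abs_eq hs0).mp hzr with h | h
    · left; rwa [show r + s = z by linarith]
    · right; rwa [show r - s = z by linarith]
  rcases hba with hba | hba
  · have himg := pts_affine (Or.inl rfl) h (ε := 1) (c := -a)
    rw [Set.image_insert_eq, Set.image_insert_eq, Set.image_singleton] at himg
    rw [show 1*a + -a = 0 by ring, show 1*b + -a = r by linarith [hba], 
      show 1*c + -a = c - a by ring] at himg
    refine main (c - a) himg ?_
    rw [show c - a - r = -(b - c) by linarith [hba], abs_neg, h2]
  · have himg := pts_affine (Or.inr rfl) h (ε := -1) (c := a)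
    rw [Set.image_insert_eq, Set.image_insert_eq, Set.image_singleton] at himg
    rw [show -1*a + a = 0 by ring, show -1*b + a = r by linarith [hba],
      show -1*c + a = a - c by ring] at himg
    refine main (a - c) himg ?_
    rw [show a - c - r = b - c by linarith [hba], h2]

lemma pts_config (hA : Amal 𝒞) (hsub : 𝒞 ⊆ MS.age ℝ) {r γ : ℝ}
    (hrV : r ∈ V 𝒞) (hγV : γ ∈ V 𝒞) (hr : 0 < r) (hγ : 0 < γ) (hne : r ≠ γ) :
    Pts 𝒞 {0, r, r + γ} := by
  obtain ⟨a, b, c, h1, h2, h⟩ := pts_glue hA hsub hrV hγV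
  rcases pts_normalize hr h1 h2 h with h' | h'
  · exact h'
  · have h0 : (0:ℝ) ∈ ({0, r, r - γ} : Set ℝ) := Set.mem_insert _ _
    have hrg : r - γ ∈ ({0, r, r - γ} : Set ℝ) :=
      Set.mem_insert_of_mem _ (Set.mem_insert_of_mem _ rfl)
    have hne0 : (0:ℝ) ≠ r - γ := fun hh => hne (by linarith)
    have hs := pts_swap hA hsub h' h0 hrg hne0
    have ht := pts_affine (Or.inl rfl) hs (ε := 1) (c := γ)
    apply pts_mono ?_ ht
    intro u hu
    simp only [Set.mem_insert_iff, Set.mem_singleton_iff] at hu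
    rcases hu with h | h | h <;> rw [h]
    · exact ⟨-γ, Set.mem_union_right _ ⟨r, Set.mem_insert_of_mem _ (Set.mem_insert _ _), by ring⟩, by ring⟩
    · exact ⟨r - γ, Set.mem_union_left _ hrg, by ring⟩
    · exact ⟨r, Set.mem_union_left _ (Set.mem_insert_of_mem _ (Set.mem_insert _ _)), by ring⟩

lemma sum_mem_ne (hA : Amal 𝒞) (hsub : 𝒞 ⊆ MS.age ℝ) {r γ : ℝ}
    (hrV : r ∈ V 𝒞) (hγV : γ ∈ V 𝒞) (hr : 0 < r) (hγ : 0 < γ) (hne : r ≠ γ) :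
    r + γ ∈ V 𝒞 := by
  have h := pts_config hA hsub hrV hγV hr hγ hne
  have := mem_V_of_pts h (Set.mem_insert_of_mem _ (Set.mem_insert_of_mem _ rfl))
    (Set.mem_insert _ _)
  rwa [show r + γ - 0 = r + γ by ring, abs_of_pos (by linarith)] at this

lemma double_mem (hA : Amal 𝒞) (hsub : 𝒞 ⊆ MS.age ℝ) {r γ : ℝ}
    (hrV : r ∈ V 𝒞) (hγV : γ ∈ V 𝒞) (hr : 0 < r) (hγ : 0 < γ) (hne : r ≠ γ) :
    r + r ∈ V 𝒞 := by
  have h1 := pts_config hA hsub hrV hγV hr hγ hne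
  -- swap at (0, r+γ)
  have hs1 := pts_swap hA hsub h1 (Set.mem_insert _ _)
    (Set.mem_insert_of_mem _ (Set.mem_insert_of_mem _ rfl))
    (by intro hh; linarith : (0:ℝ) ≠ r + γ)
  -- U₂ contains γ = 0 + (r+γ) - r
  have hγm : γ ∈ ({0, r, r + γ} : Set ℝ) ∪ (fun t => 0 + (r + γ) - t) '' {0, r, r + γ} :=
    Set.mem_union_right _ ⟨r, Set.mem_insert_of_mem _ (Set.mem_insert _ _), by ring⟩
  have h0m : (0:ℝ) ∈ ({0, r, r + γ} : Set ℝ) ∪ (fun t => 0 + (r + γ) - t) '' {0, r, r + γ} :=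
    Set.mem_union_left _ (Set.mem_insert _ _)
  have hs2 := pts_swap hA hsub hs1 h0m hγm (by intro hh; linarith : (0:ℝ) ≠ γ)
  have hrm : r ∈ (({0, r, r + γ} : Set ℝ) ∪ (fun t => 0 + (r + γ) - t) '' {0, r, r + γ}) ∪
      (fun t => 0 + γ - t) '' (({0, r, r + γ} : Set ℝ) ∪ (fun t => 0 + (r + γ) - t) '' {0, r, r + γ}) :=
    Set.mem_union_left _ (Set.mem_union_left _ (Set.mem_insert_of_mem _ (Set.mem_insert _ _)))
  have hmr : -r ∈ (({0, r, r + γ} : Set ℝ) ∪ (fun t => 0 + (r + γ) - t) '' {0, r, r + γ}) ∪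
      (fun t => 0 + γ - t) '' (({0, r, r + γ} : Set ℝ) ∪ (fun t => 0 + (r + γ) - t) '' {0, r, r + γ}) :=
    Set.mem_union_right _ ⟨r + γ,
      Set.mem_union_left _ (Set.mem_insert_of_mem _ (Set.mem_insert_of_mem _ rfl)), by ring⟩
  have := mem_V_of_pts hs2 hrm hmr
  rwa [show r - -r = r + r by ring, abs_of_pos (by linarith)] at this

lemma diff_mem' (hA : Amal 𝒞) (hsub : 𝒞 ⊆ MS.age ℝ) {r s : ℝ}
    (hrV : r ∈ V 𝒞) (hsV : s ∈ V 𝒞) (hs : 0 < s) (hsr : s < r) :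
    r - s ∈ V 𝒞 := by
  obtain ⟨a, b, c, h1, h2, h⟩ := pts_glue hA hsub hrV hsV
  rcases pts_normalize (by linarith : (0:ℝ) < r) h1 h2 h with h' | h'
  · -- Pts {0, r, r+s} : swap at (0, r+s), get s, then |r - s|
    have hs1 := pts_swap hA hsub h' (Set.mem_insert _ _)
      (Set.mem_insert_of_mem _ (Set.mem_insert_of_mem _ rfl))
      (by intro hh; linarith : (0:ℝ) ≠ r + s)
    have hsm : s ∈ ({0, r, r + s} : Set ℝ) ∪ (fun t => 0 + (r + s) - t) '' {0, r, r + s} :=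
      Set.mem_union_right _ ⟨r, Set.mem_insert_of_mem _ (Set.mem_insert _ _), by ring⟩
    have hrm : r ∈ ({0, r, r + s} : Set ℝ) ∪ (fun t => 0 + (r + s) - t) '' {0, r, r + s} :=
      Set.mem_union_left _ (Set.mem_insert_of_mem _ (Set.mem_insert _ _))
    have := mem_V_of_pts hs1 hrm hsm
    rwa [abs_of_pos (by linarith)] at this
  · have := mem_V_of_pts h' (Set.mem_insert_of_mem _ (Set.mem_insert_of_mem _ rfl))
      (Set.mem_insert _ _)
    rwa [show r - s - 0 = r - s by ring, abs_of_pos (by linarith)] at this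

end SpecAux

namespace SpecAux

variable {𝒞 : Set MS}

lemma V_nonneg {r : ℝ} (hr : r ∈ V 𝒞) : 0 ≤ r := by
  obtain ⟨Y, hY, x, y, h⟩ := hr
  exact h ▸ dist_nonneg

lemma exists_two_distinct (hsub : 𝒞 ⊆ MS.age ℝ) (hfinall : ∀ X ∈ 𝒞, Finite X.carrier)
    (h3 : ∃ Y ∈ 𝒞, Nat.card Y.carrier = 3) :
    ∃ γ₁ γ₂ : ℝ, γ₁ ∈ V 𝒞 ∧ γ₂ ∈ V 𝒞 ∧ 0 < γ₁ ∧ 0 < γ₂ ∧ γ₁ ≠ γ₂ := by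
  classical
  obtain ⟨Y, hY, hcard⟩ := h3
  haveI : Finite Y.carrier := hfinall Y hY
  haveI : Fintype Y.carrier := Fintype.ofFinite _
  have hc : Fintype.card Y.carrier = 3 := by
    rw [← Nat.card_eq_fintype_card]; exact hcard
  obtain ⟨a, b, hab⟩ := Fintype.exists_pair_of_one_lt_card (α := Y.carrier) (by omega)
  have hab2 : ({a, b} : Finset Y.carrier).card = 2 := Finset.card_pair hab
  have hsd : (Finset.univ \ {a, b} : Finset Y.carrier).Nonempty := by
    rw [← Finset.card_pos, Finset.card_sdiff_of_subset (Finset.subset_univ _)]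
    rw [hab2, Finset.card_univ, hc]
    norm_num
  obtain ⟨cc, hcc⟩ := hsd
  rw [Finset.mem_sdiff, Finset.mem_insert, Finset.mem_singleton] at hcc
  push_neg at hcc
  obtain ⟨-, hca, hcb⟩ := hcc
  obtain ⟨-, k, hk⟩ := hsub hY
  set p := k a with hp
  set q := k b with hq
  set t := k cc with htt
  have hpq : p ≠ q := fun h => hab (hk.injective h)
  have hpt : p ≠ t := fun h => hca.symm (hk.injective h)
  have hqt : q ≠ t := fun h => hcb.symm (hk.injective h)
  have hVab : |p - q| ∈ V 𝒞 := ⟨Y, hY, a, b, by rw [← hk.dist_eq, Real.dist_eq]⟩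
  have hVat : |p - t| ∈ V 𝒞 := ⟨Y, hY, a, cc, by rw [← hk.dist_eq, Real.dist_eq]⟩
  have hVbt : |q - t| ∈ V 𝒞 := ⟨Y, hY, b, cc, by rw [← hk.dist_eq, Real.dist_eq]⟩
  have h1 : 0 < |p - q| := abs_pos.mpr (sub_ne_zero_of_ne hpq)
  have h2 : 0 < |p - t| := abs_pos.mpr (sub_ne_zero_of_ne hpt)
  have h3' : 0 < |q - t| := abs_pos.mpr (sub_ne_zero_of_ne hqt)
  by_cases h : |p - q| = |q - t|
  · refine ⟨|p - q|, |p - t|, hVab, hVat, h1, h2, fun heq => ?_⟩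
    rcases abs_cases (p - q) with ⟨e1, -⟩ | ⟨e1, -⟩ <;>
      rcases abs_cases (q - t) with ⟨e2, -⟩ | ⟨e2, -⟩ <;>
        rcases abs_cases (p - t) with ⟨e3, -⟩ | ⟨e3, -⟩ <;> linarith
  · exact ⟨|p - q|, |q - t|, hVab, hVbt, h1, h3', h⟩

end SpecAux

namespace SpecAux

variable {𝒞 : Set MS}

lemma zero_mem_V (hfinall : ∀ X ∈ 𝒞, Finite X.carrier)
    (h3 : ∃ Y ∈ 𝒞, Nat.card Y.carrier = 3) : (0:ℝ) ∈ V 𝒞 := by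
  obtain ⟨Y, hY, hcard⟩ := h3
  have hne : Nonempty Y.carrier := (Nat.card_pos_iff.mp (by omega)).1
  obtain ⟨y⟩ := hne
  exact ⟨Y, hY, y, y, dist_self y⟩

lemma add_closed (hA : Amal 𝒞) (hsub : 𝒞 ⊆ MS.age ℝ)
    (hfinall : ∀ X ∈ 𝒞, Finite X.carrier)
    (h3 : ∃ Y ∈ 𝒞, Nat.card Y.carrier = 3)
    {r s : ℝ} (hr : r ∈ V 𝒞) (hs : s ∈ V 𝒞) : r + s ∈ V 𝒞 := by
  rcases (V_nonneg hr).eq_or_lt with h0 | hrpos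
  · rw [← h0, zero_add]; exact hs
  rcases (V_nonneg hs).eq_or_lt with h0 | hspos
  · rw [← h0, add_zero]; exact hr
  by_cases hne : r = s
  · rw [← hne]
    obtain ⟨γ₁, γ₂, hγ₁V, hγ₂V, hγ₁, hγ₂, hγne⟩ := exists_two_distinct hsub hfinall h3
    by_cases hg : γ₁ = r
    · exact double_mem hA hsub hr hγ₂V hrpos hγ₂ (fun e => hγne (hg.trans e))
    · exact double_mem hA hsub hr hγ₁V hrpos hγ₁ (fun e => hg e.symm)
  · exact sum_mem_ne hA hsub hr hs hrpos hspos hne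

lemma sub_closed (hA : Amal 𝒞) (hsub : 𝒞 ⊆ MS.age ℝ)
    (hfinall : ∀ X ∈ 𝒞, Finite X.carrier)
    (h3 : ∃ Y ∈ 𝒞, Nat.card Y.carrier = 3)
    {r s : ℝ} (hr : r ∈ V 𝒞) (hs : s ∈ V 𝒞) (hle : s ≤ r) : r - s ∈ V 𝒞 := by
  rcases hle.eq_or_lt with h0 | hlt
  · rw [h0, sub_self]; exact zero_mem_V hfinall h3
  rcases (V_nonneg hs).eq_or_lt with h0 | hspos
  · rw [← h0, sub_zero]; exact hr
  · exact diff_mem' hA hsub hr hs hspos hlt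

end SpecAux



/-- Let `𝒞` be an ideal of finite subspaces of `ℝ` containing a 3-element space and
having the 2-amalgamation property. Let `V` be the union of the spectra (sets of
distances) of members of `𝒞`. Then `G := V ∪ (−V)` is an additive subgroup of `ℝ`. -/
theorem spectra_union_neg_addSubgroup (𝒞 : Set MS) (h𝒞 : MS.IsIdeal 𝒞)
    (hsub : 𝒞 ⊆ MS.age ℝ)
    (h3 : ∃ Y ∈ 𝒞, Nat.card Y.carrier = 3)
    (h2am : ∀ Z : MS, Finite Z.carrier → Nat.card Z.carrier ≤ 2 →
      ∀ Y₁ ∈ 𝒞, ∀ Y₂ ∈ 𝒞,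
      ∀ (f₁ : Z.carrier → Y₁.carrier) (f₂ : Z.carrier → Y₂.carrier),
        Isometry f₁ → Isometry f₂ →
        ∃ W ∈ 𝒞, ∃ (g₁ : Y₁.carrier → W.carrier) (g₂ : Y₂.carrier → W.carrier),
          Isometry g₁ ∧ Isometry g₂ ∧ g₁ ∘ f₁ = g₂ ∘ f₂) :
    ∃ H : AddSubgroup ℝ, (H : Set ℝ) =
      {r : ℝ | ∃ Y ∈ 𝒞, ∃ x y : Y.carrier, dist x y = r} ∪
        (-{r : ℝ | ∃ Y ∈ 𝒞, ∃ x y : Y.carrier, dist x y = r}) := by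
  have hA : SpecAux.Amal 𝒞 := h2am
  have hfinall : ∀ X ∈ 𝒞, Finite X.carrier := h𝒞.2.1
  have hadd : ∀ r s : ℝ, r ∈ SpecAux.V 𝒞 → s ∈ SpecAux.V 𝒞 → r + s ∈ SpecAux.V 𝒞 :=
    fun _ _ hr hs => SpecAux.add_closed hA hsub hfinall h3 hr hs
  have hsubc : ∀ r s : ℝ, r ∈ SpecAux.V 𝒞 → s ∈ SpecAux.V 𝒞 → s ≤ r → r - s ∈ SpecAux.V 𝒞 :=
    fun _ _ hr hs hle => SpecAux.sub_closed hA hsub hfinall h3 hr hs hle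
  refine ⟨{ carrier := SpecAux.V 𝒞 ∪ -SpecAux.V 𝒞,
            zero_mem' := Or.inl (SpecAux.zero_mem_V hfinall h3),
            add_mem' := ?_, neg_mem' := ?_ }, rfl⟩
  · rintro a b (ha | ha) (hb | hb)
    · exact Or.inl (hadd _ _ ha hb)
    · have hb' : -b ∈ SpecAux.V 𝒞 := Set.mem_neg.mp hb
      by_cases hc : -b ≤ a
      · left; rw [show a + b = a - -b by ring]; exact hsubc _ _ ha hb' hc
      · right; rw [Set.mem_neg, show -(a + b) = -b - a by ring]
        exact hsubc _ _ hb' ha (by linarith)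
    · have ha' : -a ∈ SpecAux.V 𝒞 := Set.mem_neg.mp ha
      by_cases hc : -a ≤ b
      · left; rw [show a + b = b - -a by ring]; exact hsubc _ _ hb ha' hc
      · right; rw [Set.mem_neg, show -(a + b) = -a - b by ring]
        exact hsubc _ _ ha' hb (by linarith)
    · right
      rw [Set.mem_neg, show -(a + b) = -a + -b by ring]
      exact hadd _ _ (Set.mem_neg.mp ha) (Set.mem_neg.mp hb)
  · rintro a (ha | ha)
    · right; rw [Set.mem_neg, neg_neg]; exact ha
    · exact Or.inl (Set.mem_neg.mp ha)
end

section
/- Let G be an additive subgroup of ℝ equipped with the metric induced from ℝ. Then every isometry between two subsets of G extends to an isometry of G onto itself; in particular (G, |·|) is a homogeneous metric space. -/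
/-- Let `G` be an additive subgroup of `ℝ`, equipped with the metric induced from `ℝ`.
Then every isometry between two subsets of `G` extends to a self-isometry of `G`;
in particular `G` is a homogeneous metric space. -/
theorem addSubgroup_real_homogeneous (G : AddSubgroup ℝ) (A : Set G) (f : A → G)
    (hf : ∀ x y : A, dist (f x) (f y) = dist (x : G) (y : G)) :
    ∃ e : G ≃ᵢ G, ∀ x : A, e ↑x = f x := by
  by_cases hA : Nonempty A
  · obtain ⟨a⟩ := hA
    have hd : ∀ x y : A, |((f x : G) : ℝ) - ((f y : G) : ℝ)| = |((x : G) : ℝ) - ((y : G) : ℝ)| := by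
      intro x y
      have := hf x y
      simpa [Subtype.dist_eq, Real.dist_eq] using this
    by_cases hpos : ∀ x : A, ((f x : G) : ℝ) = ((x : G) : ℝ) + (((f a : G) : ℝ) - ((a : G) : ℝ))
    · refine ⟨IsometryEquiv.addLeft ((f a : G) - (a : G)), fun x => ?_⟩
      apply Subtype.ext
      have := hpos x
      simp only [IsometryEquiv.addLeft_apply]
      push_cast
      linarith
    · push_neg at hpos
      obtain ⟨x₀, hx₀⟩ := hpos
      have hx₀a : ((f x₀ : G) : ℝ) - ((f a : G) : ℝ) = -((x₀ : G) - ((a : G) : ℝ)) := by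
        rcases abs_eq_abs.mp (hd x₀ a) with h | h
        · exact absurd (by linarith) hx₀
        · linarith
      have hx₀ne : ((x₀ : G) : ℝ) ≠ ((a : G) : ℝ) := by
        intro h
        have h0 : ((f x₀ : G) : ℝ) = ((f a : G) : ℝ) := by
          have := hd x₀ a
          rw [h] at this
          simpa [sub_eq_zero] using this
        exact hx₀ (by rw [h0, h]; linarith)
      have hneg : ∀ y : A, ((f y : G) : ℝ) = -((y : G) : ℝ) + (((f a : G) : ℝ) + ((a : G) : ℝ)) := by
        intro y
        rcases abs_eq_abs.mp (hd y a) with h | h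
        · -- positive sign at y: forces y = a
          have h2 := abs_eq_abs.mp (hd y x₀)
          have hya : ((y : G) : ℝ) = ((a : G) : ℝ) := by
            rcases h2 with h2 | h2
            · exact absurd (show ((x₀ : G) : ℝ) = ((a : G) : ℝ) by linarith) hx₀ne
            · linarith
          have h0 : ((f y : G) : ℝ) = ((f a : G) : ℝ) := by
            have := hd y a
            rw [hya] at this
            simpa [sub_eq_zero] using this
          rw [h0, hya]; ring
        · linarith
      refine ⟨(IsometryEquiv.neg G).trans (IsometryEquiv.addLeft ((f a : G) + (a : G))), fun x => ?_⟩
      apply Subtype.ext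
      have := hneg x
      simp only [IsometryEquiv.trans_apply, IsometryEquiv.neg_apply, IsometryEquiv.addLeft_apply]
      push_cast
      linarith
  · exact ⟨IsometryEquiv.refl G, fun x => absurd ⟨x⟩ hA⟩
end

section
/- If 𝒮 is an ash on a set S, then the family 𝒜_𝒮 of finite edge-colored graphs with colors in S satisfying conditions (1)–(5) is an ideal: it is nonempty, closed under induced substructures, and up-directed under embeddability. -/
/-- A relational structure whose signature consists of binary relation symbols
indexed by `S` (equivalently, an `S`-edge-colored directed graph). -/
structure EdgeStruct (S : Type u) where
  carrier : Type u
  rel : S → carrier → carrier → Prop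

namespace EdgeStruct

variable {S : Type u}

/-- `f` is an embedding of structures. -/
def IsEmbedding (A B : EdgeStruct S) (f : A.carrier → B.carrier) : Prop :=
  Function.Injective f ∧ ∀ s x y, A.rel s x y ↔ B.rel s (f x) (f y)

/-- `A` embeds into `B`. -/
def Embeds (A B : EdgeStruct S) : Prop := ∃ f, IsEmbedding A B f

/-- Isomorphism of structures. -/
def Iso (A B : EdgeStruct S) : Prop :=
  ∃ f : A.carrier ≃ B.carrier, ∀ s x y, A.rel s x y ↔ B.rel s (f x) (f y)

/-- The age of `A`: (the isomorphism-closed set of) all finite structures which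
embed into `A`. -/
def age (A : EdgeStruct S) : Set (EdgeStruct S) :=
  {B | Finite B.carrier ∧ Embeds B A}

/-- An ideal of (isomorphism types of) finite structures: nonempty, all members
finite, downward closed under embeddability, and up-directed. -/
def IsIdeal (𝒜 : Set (EdgeStruct S)) : Prop :=
  𝒜.Nonempty ∧ (∀ B ∈ 𝒜, Finite B.carrier) ∧
  (∀ B C : EdgeStruct S, Finite B.carrier → Embeds B C → C ∈ 𝒜 → B ∈ 𝒜) ∧
  (∀ B ∈ 𝒜, ∀ C ∈ 𝒜, ∃ D ∈ 𝒜, Embeds B D ∧ Embeds C D)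

end EdgeStruct

open scoped Classical in
/-- A set `𝒮` of finite subsets of `S` is an *ash* on `S`. -/
def IsAsh {S : Type*} (𝒮 : Set (Finset S)) : Prop :=
  (∀ s : S, ({s} : Finset S) ∈ 𝒮) ∧
  (∀ ℱ : Finset (Finset S), ↑ℱ ⊆ 𝒮 →
    ∃ s : S, (∀ F ∈ ℱ, s ∉ F) ∧ ∀ F ∈ ℱ, insert s F ∈ 𝒮) ∧
  (∀ S' : Set S, Cardinal.mk S' = Cardinal.mk S →
    ∃ F : Finset S, ↑F ⊆ S' ∧ F ∉ 𝒮)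

/-- The class `𝒜_𝒮` of finite `S`-edge-colored graphs associated with an ash `𝒮`:
finite structures in which no relation is reflexive, all relations are symmetric,
distinct vertices are joined by exactly one colored edge, colors at a common vertex
are pairwise distinct, and every nonempty finite set of colors appearing at a single
vertex belongs to `𝒮`. -/
def AshClass {S : Type u} (𝒮 : Set (Finset S)) : Set (EdgeStruct S) :=
  {A | Finite A.carrier ∧
    (∀ s (x : A.carrier), ¬ A.rel s x x) ∧
    (∀ s (x y : A.carrier), A.rel s x y → A.rel s y x) ∧
    (∀ s t (x y : A.carrier), A.rel s x y → A.rel t x y → s = t) ∧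
    (∀ s (x y z : A.carrier), A.rel s x y → A.rel s x z → y = z) ∧
    (∀ x y : A.carrier, x ≠ y → ∃ r, A.rel r x y) ∧
    (∀ (x : A.carrier) (F : Finset S), F.Nonempty →
      (∀ r ∈ F, ∃ u, A.rel r x u) → F ∈ 𝒮)}

section Aux
open scoped Classical
universe u v

variable {S : Type u}

/-- All conditions of `AshClass` except totality. -/
def PreGood (𝒮 : Set (Finset S)) {A : Type v} (rel : S → A → A → Prop) : Prop :=
  (∀ s x, ¬ rel s x x) ∧
  (∀ s x y, rel s x y → rel s y x) ∧
  (∀ s t x y, rel s x y → rel t x y → s = t) ∧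
  (∀ s x y z, rel s x y → rel s x z → y = z) ∧
  (∀ x (F : Finset S), F.Nonempty → (∀ r ∈ F, ∃ u, rel r x u) → F ∈ 𝒮)

lemma colors_finite {𝒮 : Set (Finset S)} {A : Type v} [Finite A]
    {rel : S → A → A → Prop} (hg : PreGood 𝒮 rel) (x : A) :
    {r : S | ∃ u, rel r x u}.Finite := by
  have : Finite ↑{r : S | ∃ u, rel r x u} := by
    refine Finite.of_injective (fun r : {r : S | ∃ u, rel r x u} => r.2.choose) ?_
    rintro ⟨r1, h1⟩ ⟨r2, h2⟩ he
    dsimp at he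
    simp only [Subtype.mk.injEq]
    exact hg.2.2.1 r1 r2 x _ h1.choose_spec (he ▸ h2.choose_spec)
  exact Set.toFinite _

lemma step {𝒮 : Set (Finset S)} (h : IsAsh 𝒮) {A : Type v} [Finite A]
    {rel : S → A → A → Prop} (hg : PreGood 𝒮 rel) {x y : A} (hxy : x ≠ y)
    (hno : ¬ ∃ t, rel t x y) :
    ∃ rel' : S → A → A → Prop, PreGood 𝒮 rel' ∧
      (∀ s u v, rel s u v → rel' s u v) ∧
      (∃ t, rel' t x y) ∧
      (∀ s u v, rel' s u v → rel s u v ∨ ((u = x ∧ v = y) ∨ (u = y ∧ v = x))) := by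
  obtain ⟨h1, h2, h3, h4, h7⟩ := hg
  set Cx : Finset S := (colors_finite ⟨h1,h2,h3,h4,h7⟩ x).toFinset with hCx
  set Cy : Finset S := (colors_finite ⟨h1,h2,h3,h4,h7⟩ y).toFinset with hCy
  have memCx : ∀ r, r ∈ Cx ↔ ∃ u, rel r x u := by
    intro r; simp [hCx, Set.Finite.mem_toFinset]
  have memCy : ∀ r, r ∈ Cy ↔ ∃ u, rel r y u := by
    intro r; simp [hCy, Set.Finite.mem_toFinset]
  set ℱ : Finset (Finset S) := (Cx.powerset ∪ Cy.powerset).erase ∅ with hℱ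
  have hℱS : ↑ℱ ⊆ 𝒮 := by
    intro F hF
    simp only [hℱ, Finset.coe_erase, Set.mem_diff, Finset.coe_union, Set.mem_union,
      Finset.mem_coe, Finset.mem_powerset, Set.mem_singleton_iff] at hF
    obtain ⟨hF1, hF2⟩ := hF
    have hne : F.Nonempty := Finset.nonempty_iff_ne_empty.2 hF2
    rcases hF1 with hsub | hsub
    · exact h7 x F hne (fun r hr => (memCx r).1 (hsub hr))
    · exact h7 y F hne (fun r hr => (memCy r).1 (hsub hr))
  obtain ⟨s, hs1, hs2⟩ := h.2.1 ℱ hℱS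
  have hsCx : s ∉ Cx := by
    intro hs
    rcases Finset.eq_empty_or_nonempty Cx with he | hne
    · simp [he] at hs
    · exact hs1 Cx (by simp [hℱ, Finset.mem_erase, Finset.nonempty_iff_ne_empty.1 hne]) hs
  have hsCy : s ∉ Cy := by
    intro hs
    rcases Finset.eq_empty_or_nonempty Cy with he | hne
    · simp [he] at hs
    · exact hs1 Cy (by simp [hℱ, Finset.mem_erase, Finset.nonempty_iff_ne_empty.1 hne]) hs
  refine ⟨fun t u v => rel t u v ∨ (t = s ∧ ((u = x ∧ v = y) ∨ (u = y ∧ v = x))), ?_, ?_, ?_, ?_⟩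
  · refine ⟨?_, ?_, ?_, ?_, ?_⟩
    · rintro t u (hr | ⟨rfl, ⟨rfl, rfl⟩ | ⟨rfl, rfl⟩⟩)
      · exact h1 t u hr
      · exact hxy rfl
      · exact hxy rfl.symm
    · rintro t u v (hr | ⟨rfl, ⟨rfl, rfl⟩ | ⟨rfl, rfl⟩⟩)
      · exact Or.inl (h2 t u v hr)
      · exact Or.inr ⟨rfl, Or.inr ⟨rfl, rfl⟩⟩
      · exact Or.inr ⟨rfl, Or.inl ⟨rfl, rfl⟩⟩
    · rintro t t' u v (hr | ⟨rfl, hc⟩) (hr' | ⟨rfl, hc'⟩)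
      · exact h3 t t' u v hr hr'
      · exfalso
        rcases hc' with ⟨rfl, rfl⟩ | ⟨rfl, rfl⟩
        · exact hno ⟨t, hr⟩
        · exact hno ⟨t, h2 _ _ _ hr⟩
      · exfalso
        rcases hc with ⟨rfl, rfl⟩ | ⟨rfl, rfl⟩
        · exact hno ⟨t', hr'⟩
        · exact hno ⟨t', h2 _ _ _ hr'⟩
      · rfl
    · rintro t u v w h₁ h₂
      rcases h₁ with hr | ⟨rfl, hc⟩
      · rcases h₂ with hr' | ⟨rfl, hc'⟩
        · exact h4 t u v w hr hr'
        · exfalso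
          rcases hc' with ⟨rfl, rfl⟩ | ⟨rfl, rfl⟩
          · exact hsCx ((memCx _).2 ⟨v, hr⟩)
          · exact hsCy ((memCy _).2 ⟨v, hr⟩)
      · rcases h₂ with hr' | ⟨-, hc'⟩
        · exfalso
          rcases hc with ⟨rfl, rfl⟩ | ⟨rfl, rfl⟩
          · exact hsCx ((memCx _).2 ⟨w, hr'⟩)
          · exact hsCy ((memCy _).2 ⟨w, hr'⟩)
        · rcases hc with ⟨rfl, rfl⟩ | ⟨rfl, rfl⟩ <;> rcases hc' with ⟨h', rfl⟩ | ⟨h', rfl⟩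
          · rfl
          · exact absurd h' hxy
          · exact absurd h' hxy.symm
          · rfl
    · intro z F hFne hF
      by_cases hz : z = x ∨ z = y
      · -- colors at z are old colors ∪ {s}
        have hCz : ∀ r ∈ F, r = s ∨ (∃ u, rel r z u) := by
          intro r hr
          rcases hF r hr with ⟨u, hu | ⟨rfl, _⟩⟩
          · exact Or.inr ⟨u, hu⟩
          · exact Or.inl rfl
        set C : Finset S := if z = x then Cx else Cy with hC
        have memC : ∀ r, r ∈ C ↔ ∃ u, rel r z u := by
          intro r
          rcases hz with rfl | rfl
          · simpa [hC] using memCx r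
          · have hzx : z ≠ x := hxy.symm
            simp only [hC, if_neg hzx]
            exact memCy r
        have hsC : s ∉ C := by
          rcases hz with rfl | rfl
          · simpa [hC] using hsCx
          · have hzx : z ≠ x := hxy.symm
            simp only [hC, if_neg hzx]; exact hsCy
        have hCℱ : ∀ G : Finset S, G.Nonempty → G ⊆ C → G ∈ ℱ := by
          intro G hGne hGC
          simp only [hℱ, Finset.mem_erase, Finset.mem_union, Finset.mem_powerset]
          refine ⟨Finset.nonempty_iff_ne_empty.1 hGne, ?_⟩
          rcases hz with rfl | rfl
          · left; simpa [hC] using hGC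
          · right
            have hzx : z ≠ x := hxy.symm
            rw [hC, if_neg hzx] at hGC
            exact hGC
        by_cases hsF : s ∈ F
        · set F' := F.erase s with hF'
          have hF'C : F' ⊆ C := by
            intro r hr
            have hrs : r ≠ s := Finset.ne_of_mem_erase hr
            rcases hCz r (Finset.mem_of_mem_erase hr) with rfl | hu
            · exact absurd rfl hrs
            · exact (memC r).2 hu
          rcases Finset.eq_empty_or_nonempty F' with he | hne
          · have : F = {s} := by
              ext r
              simp only [Finset.mem_singleton]
              constructor
              · intro hr
                by_contra hrs
                have : r ∈ F' := Finset.mem_erase.2 ⟨hrs, hr⟩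
                simp [he] at this
              · rintro rfl; exact hsF
            rw [this]; exact h.1 s
          · have hFℱ : F' ∈ ℱ := hCℱ F' hne hF'C
            have := hs2 F' hFℱ
            rwa [Finset.insert_erase hsF] at this
        · have hFC : F ⊆ C := by
            intro r hr
            rcases hCz r hr with rfl | hu
            · exact absurd hr hsF
            · exact (memC r).2 hu
          rcases hz with rfl | rfl
          · exact h7 z F hFne (fun r hr => (memCx r).1 (by simpa [hC] using hFC hr))
          · have hzx : z ≠ x := hxy.symm
            rw [hC, if_neg hzx] at hFC
            exact h7 z F hFne (fun r hr => (memCy r).1 (hFC hr))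
      · push_neg at hz
        refine h7 z F hFne (fun r hr => ?_)
        rcases hF r hr with ⟨u, hu | ⟨rfl, ⟨rfl, _⟩ | ⟨rfl, _⟩⟩⟩
        · exact ⟨u, hu⟩
        · exact absurd rfl hz.1
        · exact absurd rfl hz.2
  · intro s' u v hr; exact Or.inl hr
  · exact ⟨s, Or.inr ⟨rfl, Or.inl ⟨rfl, rfl⟩⟩⟩
  · rintro t u v (hr | ⟨rfl, hc⟩)
    · exact Or.inl hr
    · exact Or.inr hc

lemma complete {𝒮 : Set (Finset S)} (h : IsAsh 𝒮) {A : Type v} [Finite A]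
    (rel : S → A → A → Prop) (hg : PreGood 𝒮 rel) :
    ∃ rel' : S → A → A → Prop, PreGood 𝒮 rel' ∧
      (∀ x y : A, x ≠ y → ∃ t, rel' t x y) ∧
      (∀ s x y, rel s x y → rel' s x y) ∧
      (∀ s x y, rel' s x y → (∃ t, rel t x y) → rel s x y) := by
  cases nonempty_fintype A
  have key : ∀ n (rel : S → A → A → Prop), PreGood 𝒮 rel →
      (Finset.univ.filter fun p : A × A => p.1 ≠ p.2 ∧ ¬ ∃ t, rel t p.1 p.2).card ≤ n →
      ∃ rel' : S → A → A → Prop, PreGood 𝒮 rel' ∧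
        (∀ x y : A, x ≠ y → ∃ t, rel' t x y) ∧
        (∀ s x y, rel s x y → rel' s x y) ∧
        (∀ s x y, rel' s x y → (∃ t, rel t x y) → rel s x y) := by
    intro n
    induction n with
    | zero =>
      intro rel hg hc
      refine ⟨rel, hg, ?_, fun _ _ _ hr => hr, fun _ _ _ hr _ => hr⟩
      intro x y hxy
      by_contra hno
      have hmem : (x, y) ∈ (Finset.univ.filter
          fun p : A × A => p.1 ≠ p.2 ∧ ¬ ∃ t, rel t p.1 p.2) := by
        simp only [Finset.mem_filter, Finset.mem_univ, true_and]
        exact ⟨hxy, hno⟩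
      have := Finset.card_pos.2 ⟨_, hmem⟩
      omega
    | succ n ih =>
      intro rel hg hc
      by_cases htot : ∀ x y : A, x ≠ y → ∃ t, rel t x y
      · exact ⟨rel, hg, htot, fun _ _ _ hr => hr, fun _ _ _ hr _ => hr⟩
      · push_neg at htot
        obtain ⟨x, y, hxy, hno⟩ := htot
        have hno' : ¬ ∃ t, rel t x y := by
          rintro ⟨t, ht⟩; exact hno t ht
        obtain ⟨rel₂, hg₂, hmono, hxy₂, hnew⟩ := step h hg hxy hno'
        have hsub : (Finset.univ.filter
              fun p : A × A => p.1 ≠ p.2 ∧ ¬ ∃ t, rel₂ t p.1 p.2) ⊆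
            (Finset.univ.filter
              fun p : A × A => p.1 ≠ p.2 ∧ ¬ ∃ t, rel t p.1 p.2).erase (x, y) := by
          intro p hp
          simp only [Finset.mem_filter, Finset.mem_univ, true_and] at hp
          rw [Finset.mem_erase]
          refine ⟨?_, by
            simp only [Finset.mem_filter, Finset.mem_univ, true_and]
            exact ⟨hp.1, fun ⟨t, ht⟩ => hp.2 ⟨t, hmono t _ _ ht⟩⟩⟩
          rintro rfl
          exact hp.2 hxy₂
        have hmemxy : (x, y) ∈ (Finset.univ.filter
            fun p : A × A => p.1 ≠ p.2 ∧ ¬ ∃ t, rel t p.1 p.2) := by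
          simp only [Finset.mem_filter, Finset.mem_univ, true_and]
          exact ⟨hxy, hno'⟩
        have hcard : (Finset.univ.filter
            fun p : A × A => p.1 ≠ p.2 ∧ ¬ ∃ t, rel₂ t p.1 p.2).card ≤ n := by
          have h1 := Finset.card_le_card hsub
          rw [Finset.card_erase_of_mem hmemxy] at h1
          have h2 := Finset.card_pos.2 ⟨_, hmemxy⟩
          omega
        obtain ⟨rel', hg', htot', hmono', hres'⟩ := ih rel₂ hg₂ hcard
        refine ⟨rel', hg', htot', fun s u v hr => hmono' s u v (hmono s u v hr), ?_⟩
        rintro s u v hr ⟨t, ht⟩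
        have h2 : rel₂ s u v := hres' s u v hr ⟨t, hmono t u v ht⟩
        rcases hnew s u v h2 with hrel | hc'
        · exact hrel
        · exfalso
          rcases hc' with ⟨rfl, rfl⟩ | ⟨rfl, rfl⟩
          · exact hno' ⟨t, ht⟩
          · exact hno' ⟨t, hg.2.1 t u v ht⟩
  exact key _ rel hg le_rfl

end Aux

/-- If `𝒮` is an ash on `S`, then `𝒜_𝒮` is an ideal: nonempty, closed under induced
substructures (downward closed under embeddability), and up-directed. -/
theorem ashClass_isIdeal {S : Type u} (𝒮 : Set (Finset S)) (h : IsAsh 𝒮) :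
    EdgeStruct.IsIdeal (AshClass 𝒮) := by
  obtain ⟨hash1, hash2, hash3⟩ := h
  constructor
  · -- nonempty: the empty structure
    refine ⟨⟨PEmpty, fun _ _ _ => False⟩, inferInstance, ?_, ?_, ?_, ?_, ?_, ?_⟩
    · intro s x; exact x.elim
    · intro s x; exact x.elim
    · intro s t x; exact x.elim
    · intro s x; exact x.elim
    · intro x; exact x.elim
    · intro x; exact x.elim
  refine ⟨fun B hB => hB.1, ?_, ?_⟩
  · -- downward closed
    rintro B C hBfin ⟨f, hfinj, hf⟩ ⟨_, hC1, hC2, hC3, hC4, hC5, hC6⟩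
    refine ⟨hBfin, ?_, ?_, ?_, ?_, ?_, ?_⟩
    · intro s x hx; exact hC1 s (f x) ((hf s x x).1 hx)
    · intro s x y hxy; exact (hf s y x).2 (hC2 s (f x) (f y) ((hf s x y).1 hxy))
    · intro s t x y hs ht; exact hC3 s t (f x) (f y) ((hf s x y).1 hs) ((hf t x y).1 ht)
    · intro s x y z hy hz
      exact hfinj (hC4 s (f x) (f y) (f z) ((hf s x y).1 hy) ((hf s x z).1 hz))
    · intro x y hxy
      obtain ⟨r, hr⟩ := hC5 (f x) (f y) (fun he => hxy (hfinj he))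
      exact ⟨r, (hf r x y).2 hr⟩
    · intro x F hFne hF
      refine hC6 (f x) F hFne (fun r hr => ?_)
      obtain ⟨u, hu⟩ := hF r hr
      exact ⟨f u, (hf r x u).1 hu⟩
  · -- up-directed
    rintro B ⟨hBfin, hB1, hB2, hB3, hB4, hB5, hB6⟩ C ⟨hCfin, hC1, hC2, hC3, hC4, hC5, hC6⟩
    haveI := hBfin; haveI := hCfin
    set rel0 : S → B.carrier ⊕ C.carrier → B.carrier ⊕ C.carrier → Prop :=
      fun s p q =>
        match p, q with
        | Sum.inl x, Sum.inl y => B.rel s x y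
        | Sum.inr x, Sum.inr y => C.rel s x y
        | _, _ => False with hrel0
    have hg0 : PreGood 𝒮 rel0 := by
      refine ⟨?_, ?_, ?_, ?_, ?_⟩
      · rintro s (x | x) hx
        · exact hB1 s x hx
        · exact hC1 s x hx
      · rintro s (x | x) (y | y) hxy <;> first
          | exact hB2 s x y hxy
          | exact hC2 s x y hxy
          | exact hxy.elim
      · rintro s t (x | x) (y | y) hs ht <;> first
          | exact hB3 s t x y hs ht
          | exact hC3 s t x y hs ht
          | exact hs.elim
      · rintro s (x | x) (y | y) (z | z) hy hz <;> first
          | exact congrArg Sum.inl (hB4 s x y z hy hz)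
          | exact congrArg Sum.inr (hC4 s x y z hy hz)
          | exact hy.elim
          | exact hz.elim
      · rintro (x | x) F hFne hF
        · refine hB6 x F hFne (fun r hr => ?_)
          obtain ⟨u, hu⟩ := hF r hr
          cases u with
          | inl u => exact ⟨u, hu⟩
          | inr u => exact hu.elim
        · refine hC6 x F hFne (fun r hr => ?_)
          obtain ⟨u, hu⟩ := hF r hr
          cases u with
          | inl u => exact hu.elim
          | inr u => exact ⟨u, hu⟩
    obtain ⟨rel', hg', htot', hmono', hres'⟩ :=
      complete ⟨hash1, hash2, hash3⟩ rel0 hg0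
    refine ⟨⟨B.carrier ⊕ C.carrier, rel'⟩, ⟨inferInstance, hg'.1, hg'.2.1, hg'.2.2.1,
      hg'.2.2.2.1, htot', hg'.2.2.2.2⟩, ⟨Sum.inl, Sum.inl_injective, ?_⟩,
      ⟨Sum.inr, Sum.inr_injective, ?_⟩⟩
    · intro s x y
      constructor
      · intro hr; exact hmono' s _ _ hr
      · intro hr
        rcases eq_or_ne x y with rfl | hxy
        · exact absurd hr (hg'.1 s (Sum.inl x))
        · obtain ⟨t, ht⟩ := hB5 x y hxy
          have : rel0 s (Sum.inl x) (Sum.inl y) :=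
            hres' s _ _ hr ⟨t, ht⟩
          exact this
    · intro s x y
      constructor
      · intro hr; exact hmono' s _ _ hr
      · intro hr
        rcases eq_or_ne x y with rfl | hxy
        · exact absurd hr (hg'.1 s (Sum.inr x))
        · obtain ⟨t, ht⟩ := hC5 x y hxy
          have : rel0 s (Sum.inr x) (Sum.inr y) :=
            hres' s _ _ hr ⟨t, ht⟩
          exact this
end

section
/- If G is an ash-graph, then the collection of finite subsets F of the vertex set such that F contains a vertex adjacent (or equal) to all other elements of F is an ash on G. -/
/-- If `G` is an ash-graph (for every finite set `F` of vertices there is a vertex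
outside `F` adjacent to all of `F`, and `G` has no complete subgraph of cardinality
`|G|`), then the finite sets of vertices containing an element adjacent (or equal) to
all other elements form an ash on the vertex set. -/
theorem ash_of_ashGraph {V : Type*} (G : SimpleGraph V)
    (h1 : ∀ F : Finset V, ∃ v : V, v ∉ F ∧ ∀ u ∈ F, G.Adj v u)
    (h2 : ¬ ∃ K : Set V, Cardinal.mk K = Cardinal.mk V ∧ K.Pairwise G.Adj) :
    IsAsh {F : Finset V | ∃ x ∈ F, ∀ y ∈ F, y ≠ x → G.Adj x y} := by
  classical
  refine ⟨?_, ?_, ?_⟩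
  · intro s
    exact ⟨s, Finset.mem_singleton_self s, fun y hy hne =>
      absurd (Finset.mem_singleton.mp hy) hne⟩
  · intro ℱ _
    obtain ⟨v, hv, hadj⟩ := h1 (ℱ.biUnion id)
    refine ⟨v, fun F hF hvF => hv (Finset.mem_biUnion.mpr ⟨F, hF, hvF⟩), ?_⟩
    intro F hF
    refine ⟨v, Finset.mem_insert_self v F, fun y hy hne => ?_⟩
    rcases Finset.mem_insert.mp hy with rfl | hyF
    · exact absurd rfl hne
    · exact hadj y (Finset.mem_biUnion.mpr ⟨F, hF, hyF⟩)
  · intro S' hcard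
    by_contra hcon
    push_neg at hcon
    apply h2
    refine ⟨S', hcard, fun a ha b hb hab => ?_⟩
    have h := hcon {a, b} (by
      intro x hx
      rcases Finset.mem_insert.mp hx with rfl | hx
      · exact ha
      · rw [Finset.mem_singleton.mp hx]; exact hb)
    obtain ⟨x, hx, hadj⟩ := h
    rcases Finset.mem_insert.mp hx with rfl | hx
    · exact hadj b (by simp) (Ne.symm hab)
    · rw [Finset.mem_singleton.mp hx] at hadj
      exact (hadj a (by simp) hab).symm
end

section
/- If P = (P, ≤) is an up-directed poset with no maximal element and no chain of cardinality |P|, then the set 𝒫 of finite subsets F of P containing a greatest element (an x ∈ F with x ≥ y for all y ∈ F) is an ash on P. -/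
/-- If `P` is an up-directed poset with no maximal element and no chain of
cardinality `|P|` (an ash-poset), then the set of finite subsets of `P` containing a
greatest element is an ash on `P`. -/
theorem ash_of_ashPoset {P : Type*} [PartialOrder P]
    (hdir : ∀ x y : P, ∃ z : P, x ≤ z ∧ y ≤ z)
    (hnomax : ∀ x : P, ∃ y : P, x < y)
    (hchain : ¬ ∃ C : Set P, IsChain (· ≤ ·) C ∧ Cardinal.mk C = Cardinal.mk P) :
    IsAsh {F : Finset P | ∃ x ∈ F, ∀ y ∈ F, y ≤ x} := by
  classical
  have hne : Nonempty P := by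
    by_contra h
    exact hchain ⟨∅, by simp [IsChain], by
      rw [Cardinal.mk_eq_zero_iff.2 (by simp), Eq.comm, Cardinal.mk_eq_zero_iff]
      exact not_nonempty_iff.1 h⟩
  haveI : IsDirected P (· ≤ ·) := ⟨hdir⟩
  refine ⟨fun s => ⟨s, by simp⟩, fun ℱ _ => ?_, fun S' hS' => ?_⟩
  · obtain ⟨M, hM⟩ := Finset.exists_le (ℱ.sup id)
    obtain ⟨s, hs⟩ := hnomax M
    have key : ∀ F ∈ ℱ, ∀ y ∈ F, y < s := fun F hF y hy =>
      lt_of_le_of_lt (hM y (Finset.mem_sup.2 ⟨F, hF, hy⟩)) hs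
    refine ⟨s, fun F hF hsF => lt_irrefl s (key F hF s hsF), fun F hF => ?_⟩
    exact ⟨s, Finset.mem_insert_self s F, fun y hy => by
      rcases Finset.mem_insert.1 hy with rfl | hy
      · exact le_rfl
      · exact (key F hF y hy).le⟩
  · by_contra h
    push_neg at h
    refine hchain ⟨S', fun x hx y hy hxy => ?_, hS'⟩
    obtain ⟨z, hz, hmax⟩ := h {x, y} (by
      intro a ha
      rcases Finset.mem_insert.1 ha with rfl | ha
      · exact hx
      · exact (Finset.mem_singleton.1 ha) ▸ hy)
    rcases Finset.mem_insert.1 hz with rfl | hz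
    · exact Or.inr (hmax y (by simp))
    · rw [Finset.mem_singleton] at hz; subst hz
      exact Or.inl (hmax x (by simp))
end

section
/- For the signature with countably many binary relation symbols, the space of ideals 𝒥(Ω) (with the topology induced by the product topology on the power set of Ω) is not compact: there exist two one-element structures 𝔄, 𝔅 and an infinite family of pairwise non-isomorphic two-element structures ℭₙ such that 𝔄 and 𝔅 embed into each ℭₙ but no proper induced substructure of ℭₙ embeds both 𝔄 and 𝔅. -/
/-- The substructure of `A` induced on a subset `X` of its carrier. -/
def EdgeStruct.restrict {S : Type u} (A : EdgeStruct S) (X : Set A.carrier) :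
    EdgeStruct S :=
  ⟨X, fun s x y => A.rel s (↑x) (↑y)⟩

open EdgeStruct in
/-- For the signature consisting of countably many binary relation symbols, the space
of ideals is not compact: there are two one-element structures `A`, `B` and an
infinite family of pairwise non-isomorphic two-element structures `Cₙ` such that `A`
and `B` embed into each `Cₙ`, but no proper induced substructure of `Cₙ` embeds
both `A` and `B`. -/
theorem ideals_not_compact_countable_binary :
    ∃ (A B : EdgeStruct ℕ) (C : ℕ → EdgeStruct ℕ),
      Nat.card A.carrier = 1 ∧ Nat.card B.carrier = 1 ∧
      (∀ n, Nat.card (C n).carrier = 2) ∧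
      (∀ m n, m ≠ n → ¬ Iso (C m) (C n)) ∧
      (∀ n, Embeds A (C n) ∧ Embeds B (C n)) ∧
      (∀ n, ∀ X : Set (C n).carrier, X ≠ Set.univ →
        ¬ (Embeds A ((C n).restrict X) ∧ Embeds B ((C n).restrict X))) := by
  refine ⟨⟨PUnit, fun s _ _ => s = 0⟩, ⟨PUnit, fun s _ _ => s = 1⟩,
    fun n => ⟨Bool, fun s x y =>
      (x = false ∧ y = false ∧ s = 0) ∨ (x = true ∧ y = true ∧ s = 1) ∨
      (x ≠ y ∧ s = n + 2)⟩, ?_, ?_, ?_, ?_, ?_, ?_⟩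
  · simp
  · simp
  · intro n; simp [Nat.card_eq_fintype_card]
  · rintro m n hmn ⟨f, hf⟩
    have h1 : (¬(false = true)) ∧ (m + 2 = m + 2) := ⟨by simp, rfl⟩
    have h2 := (hf (m + 2) false true).mp (Or.inr (Or.inr ⟨by simp, rfl⟩))
    have hne : f false ≠ f true := fun h => by simpa using f.injective h
    rcases h2 with ⟨ha, hb, _⟩ | ⟨ha, hb, _⟩ | ⟨_, hs⟩
    · exact hne (ha.trans hb.symm)
    · exact hne (ha.trans hb.symm)
    · omega
  · intro n
    constructor
    · refine ⟨fun _ => false, fun a b => by simp, fun s x y => ?_⟩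
      simp
    · refine ⟨fun _ => true, fun a b => by simp, fun s x y => ?_⟩
      simp
  · rintro n X hX ⟨⟨f, hf⟩, ⟨g, hg⟩⟩
    have hfA := (hf.2 0 PUnit.unit PUnit.unit).mp rfl
    have hgB := (hg.2 1 PUnit.unit PUnit.unit).mp rfl
    have hfalse : (false : Bool) ∈ X := by
      rcases hfA with ⟨ha, _, _⟩ | ⟨_, _, h⟩ | ⟨h, _⟩
      · rw [← ha]; exact (f PUnit.unit).2
      · exact absurd h (by simp)
      · exact absurd rfl h
    have htrue : (true : Bool) ∈ X := by
      rcases hgB with ⟨_, _, h⟩ | ⟨ha, _, _⟩ | ⟨h, _⟩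
      · exact absurd h (by simp)
      · rw [← ha]; exact (g PUnit.unit).2
      · exact absurd rfl h
    exact hX (Set.eq_univ_iff_forall.mpr fun b => by cases b <;> assumption)
end
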